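/- arXiv:2209.14626 — 16 statements merged into one kernel-verified Lean document; each statement's English description precedes it below -/
import Mathlib

section
/- Let G = (V,E) be a profinite graph satisfying the following property (IV): for every nonempty open set U ⊆ V there is a nonempty open W ⊆ U such that no edge of G joins a point of W to a point of V \ U. Then the set of isolated vertices of G is a dense Gδ subset of V. -/
/-- Let G = (V,E) be a profinite graph satisfying property (IV):
for every nonempty open set U ⊆ V there is a nonempty open W ⊆ U such that no
edge of G joins a point of W to a point of V \ U. Then the set of isolated
vertices of G is a dense Gδ subset of V. -/
theorem stmt_2 {V : Type*} [TopologicalSpace V] [CompactSpace V]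
    [TopologicalSpace.MetrizableSpace V] [TotallyDisconnectedSpace V] [Nonempty V]
    (E : V → V → Prop)
    (hclosed : IsClosed {p : V × V | E p.1 p.2})
    (hrefl : ∀ x, E x x)
    (hsymm : ∀ x y, E x y → E y x)
    (hIV : ∀ U : Set V, IsOpen U → U.Nonempty →
      ∃ W : Set V, IsOpen W ∧ W.Nonempty ∧ W ⊆ U ∧
        ∀ w ∈ W, ∀ v ∉ U, ¬ E w v) :
    Dense {x : V | ∀ y, y ≠ x → ¬ E x y} ∧
      IsGδ {x : V | ∀ y, y ≠ x → ¬ E x y} := by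
  letI : MetricSpace V := TopologicalSpace.metrizableSpaceMetric V
  set S : Set V := {x : V | ∀ y, y ≠ x → ¬ E x y} with hS
  set G : ℕ → Set V := fun n => {x : V | ∀ y, E x y → dist x y < 1 / (n + 1)} with hG
  have hSG : S = ⋂ n, G n := by
    ext x
    simp only [hS, hG, Set.mem_setOf_eq, Set.mem_iInter]
    constructor
    · intro h n y hxy
      by_cases hy : y = x
      · subst hy; rw [dist_self]; positivity
      · exact absurd hxy (h y hy)
    · intro h y hy hxy
      have hd : 0 < dist x y := dist_pos.2 fun e => hy e.symm
      obtain ⟨n, hn⟩ := exists_nat_one_div_lt hd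
      exact absurd (h n y hxy) (not_lt.2 hn.le)
  have hopen : ∀ n, IsOpen (G n) := by
    intro n
    rw [← isClosed_compl_iff]
    have : (G n)ᶜ = Prod.fst '' {p : V × V | E p.1 p.2 ∧ 1 / (n + 1 : ℝ) ≤ dist p.1 p.2} := by
      ext x
      constructor
      · intro hx
        simp only [hG, Set.mem_compl_iff, Set.mem_setOf_eq, not_forall, not_lt] at hx
        obtain ⟨y, hxy, hd⟩ := hx
        exact ⟨(x, y), ⟨hxy, hd⟩, rfl⟩
      · rintro ⟨⟨a, b⟩, ⟨hab, hd⟩, rfl⟩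
        simp only [hG, Set.mem_compl_iff, Set.mem_setOf_eq, not_forall, not_lt]
        exact ⟨b, hab, hd⟩
    rw [this]
    have hK : IsClosed {p : V × V | E p.1 p.2 ∧ 1 / (n + 1 : ℝ) ≤ dist p.1 p.2} := by
      apply hclosed.inter
      exact isClosed_le continuous_const (continuous_fst.dist continuous_snd)
    exact (hK.isCompact.image continuous_fst).isClosed
  have hdense : ∀ n, Dense (G n) := by
    intro n
    rw [dense_iff_inter_open]
    intro U hU ⟨x0, hx0⟩
    set ε : ℝ := 1 / (n + 1) with hε
    have hεpos : 0 < ε := by rw [hε]; positivity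
    set U' : Set V := U ∩ Metric.ball x0 (ε / 2) with hU'
    have hU'open : IsOpen U' := hU.inter Metric.isOpen_ball
    have hU'ne : U'.Nonempty := ⟨x0, hx0, Metric.mem_ball_self (by linarith)⟩
    obtain ⟨W, hWopen, ⟨w, hw⟩, hWU, hWE⟩ := hIV U' hU'open hU'ne
    refine ⟨w, (hWU hw).1, ?_⟩
    intro y hxy
    have hy : y ∈ U' := by
      by_contra hy
      exact hWE w hw y hy hxy
    have h1 : dist w x0 < ε / 2 := (hWU hw).2
    have h2 : dist y x0 < ε / 2 := hy.2
    calc dist w y ≤ dist w x0 + dist x0 y := dist_triangle _ _ _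
      _ = dist w x0 + dist y x0 := by rw [dist_comm y x0]
      _ < ε := by linarith
  rw [hSG]
  exact ⟨dense_iInter_of_isOpen hopen hdense,
    IsGδ.iInter_of_isOpen hopen⟩
end

section
/- Let G = (V,E) be a profinite graph and let H ⊆ V be a topologically dense subset such that the induced graph on H is positively 3-saturated, i.e. for every X ⊆ H with |X| < 3 there exists x ∈ H \ X adjacent to every vertex in X. Then G contains no isolated vertices: every x ∈ V is adjacent to some y ≠ x. -/
/-- Let G = (V,E) be a profinite graph and let H ⊆ V be a
topologically dense subset such that the induced graph on H is positively
3-saturated: for every X ⊆ H with |X| < 3 there exists x ∈ H \ X adjacent to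
every vertex in X. Then G contains no isolated vertices: every x ∈ V is
adjacent to some y ≠ x. -/
theorem stmt_3 {V : Type*} [TopologicalSpace V] [CompactSpace V]
    [TopologicalSpace.MetrizableSpace V] [TotallyDisconnectedSpace V] [Nonempty V]
    (E : V → V → Prop)
    (hclosed : IsClosed {p : V × V | E p.1 p.2})
    (hrefl : ∀ x, E x x)
    (hsymm : ∀ x y, E x y → E y x)
    (H : Set V) (hdense : Dense H)
    (hsat : ∀ S : Finset V, ↑S ⊆ H → S.card < 3 →
      ∃ x ∈ H, x ∉ S ∧ ∀ y ∈ S, E x y) :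
    ∀ x : V, ∃ y, y ≠ x ∧ E x y := by
  classical
  letI : MetricSpace V := TopologicalSpace.metrizableSpaceMetric V
  intro x
  -- first, find z ∈ H with z ≠ x
  obtain ⟨z, hzH, hzx⟩ : ∃ z ∈ H, z ≠ x := by
    by_contra hcon
    push_neg at hcon
    -- then H ⊆ {x}, so V = {x}
    have hHx : H ⊆ {x} := fun a ha => hcon a ha
    have hVx : (Set.univ : Set V) ⊆ {x} := by
      have := hdense.closure_eq
      rw [← this]
      calc closure H ⊆ closure {x} := closure_mono hHx
        _ = {x} := closure_singleton
    have hxH : x ∈ H := by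
      rcases hdense.exists_mem_open isOpen_univ ⟨x, trivial⟩ with ⟨a, haH, -⟩
      have hax : a = x := hVx trivial
      rwa [hax] at haH
    obtain ⟨w, hwH, hwS, -⟩ := hsat {x} (by
      intro a ha
      simp only [Finset.coe_singleton, Set.mem_singleton_iff] at ha
      rw [ha]; exact hxH) (by simp)
    have hwx : w = x := hVx trivial
    simp [hwx] at hwS
  -- sequence in H converging to x
  obtain ⟨u, huH, hu⟩ : ∃ u : ℕ → V, (∀ n, u n ∈ H) ∧ Filter.Tendsto u Filter.atTop (nhds x) :=
    mem_closure_iff_seq_limit.mp (hdense x)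
  -- for each n, common neighbor of u n and z
  have key : ∀ n : ℕ, ∃ g ∈ H, E g (u n) ∧ E g z := by
    intro n
    obtain ⟨g, hgH, _, hgadj⟩ := hsat {u n, z} (by
      intro a ha
      simp at ha
      rcases ha with h | h
      · rw [h]; exact huH n
      · rw [h]; exact hzH) (by
        have h1 := Finset.card_insert_le (u n) ({z} : Finset V)
        have h2 : ({z} : Finset V).card = 1 := Finset.card_singleton z
        omega)
    exact ⟨g, hgH, hgadj _ (by simp), hgadj _ (by simp)⟩
  choose g hgH hg1 hg2 using key
  obtain ⟨y, -, φ, hφ, hgy⟩ :=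
    IsCompact.tendsto_subseq (isCompact_univ) (fun n => (Set.mem_univ (g n)))
  have hux : Filter.Tendsto (fun k => u (φ k)) Filter.atTop (nhds x) :=
    hu.comp hφ.tendsto_atTop
  have hEy_x : E y x := by
    have : Filter.Tendsto (fun k => ((g (φ k)), u (φ k))) Filter.atTop (nhds (y, x)) :=
      hgy.prodMk_nhds hux
    exact hclosed.mem_of_tendsto this (Filter.Eventually.of_forall fun k => hg1 (φ k))
  have hEy_z : E y z := by
    have : Filter.Tendsto (fun k => ((g (φ k)), z)) Filter.atTop (nhds (y, z)) :=
      hgy.prodMk_nhds tendsto_const_nhds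
    exact hclosed.mem_of_tendsto this (Filter.Eventually.of_forall fun k => hg2 (φ k))
  by_cases hyx : y = x
  · exact ⟨z, hzx, hyx ▸ hEy_z⟩
  · exact ⟨y, hyx, hsymm _ _ hEy_x⟩
end

section
/- Let K be a nonempty compact Hausdorff topological space with a reflexive symmetric edge relation E such that every section {y ∈ K : (x,y) ∈ E} is closed. Let D ⊆ K be a dense subset and suppose that for every finite set S ⊆ D there is a vertex of K adjacent to all elements of S. Then K contains a vertex adjacent to all vertices of K. -/
/-- Let K be a nonempty compact Hausdorff space with a reflexive
symmetric edge relation E such that every section {y ∈ K : (x,y) ∈ E} is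
closed. Let D ⊆ K be dense and suppose that for every finite set S ⊆ D there
is a vertex of K adjacent to all elements of S. Then K contains a vertex
adjacent to all vertices of K. -/
theorem stmt_4 {K : Type*} [TopologicalSpace K] [CompactSpace K] [T2Space K]
    [Nonempty K]
    (E : K → K → Prop)
    (hrefl : ∀ x, E x x)
    (hsymm : ∀ x y, E x y → E y x)
    (hsections : ∀ x : K, IsClosed {y : K | E x y})
    (D : Set K) (hdense : Dense D)
    (hfin : ∀ S : Finset K, ↑S ⊆ D → ∃ v : K, ∀ s ∈ S, E v s) :
    ∃ v : K, ∀ y : K, E v y := by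
  have hclosed : ∀ d : D, IsClosed {v : K | E v d.1} := by
    intro d
    have : {v : K | E v d.1} = {v : K | E d.1 v} := by
      ext v; exact ⟨fun h => hsymm _ _ h, fun h => hsymm _ _ h⟩
    rw [this]; exact hsections _
  have h1 : (⋂ d : D, {v : K | E v d.1}).Nonempty := by
    by_contra h
    rw [Set.not_nonempty_iff_eq_empty] at h
    have h2 : (Set.univ : Set K) ∩ ⋂ d : D, {v : K | E v d.1} = ∅ := by
      simp [h]
    obtain ⟨t, ht⟩ := isCompact_univ.elim_finite_subfamily_closed _ hclosed h2
    classical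
    obtain ⟨v, hv⟩ := hfin (t.image (fun d => d.1)) (by
      intro x hx
      obtain ⟨d, _, rfl⟩ := Finset.mem_image.mp hx
      exact d.2)
    have : v ∈ (Set.univ : Set K) ∩ ⋂ d ∈ t, {v : K | E v d.1} := by
      refine ⟨trivial, ?_⟩
      simp only [Set.mem_iInter]
      intro d hd
      exact hv d.1 (Finset.mem_image_of_mem _ hd)
    rw [ht] at this
    exact this
  obtain ⟨v, hv⟩ := h1
  refine ⟨v, fun y => ?_⟩
  have hsub : D ⊆ {s : K | E v s} := by
    intro d hd
    exact (show E v d from Set.mem_iInter.mp hv ⟨d, hd⟩)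
  have : closure D ⊆ {s : K | E v s} := closure_minimal hsub (hsections v)
  exact this (hdense y)
end

section
/- No compact graph is ω-saturated: if X is a nonempty compact Hausdorff space and E is a closed reflexive symmetric relation on X, then the graph (X,E) is not ω-saturated. Moreover, no open graph on a compact space is ω-saturated: if X is a nonempty compact Hausdorff space and E is an open symmetric subset of X × X disjoint from the diagonal, then the graph on X whose edge relation is E ∪ {(x,x) : x ∈ X} is not ω-saturated. -/
/-- A graph (with edge relation `E`) is ω-saturated if for every pair of
disjoint finite sets A, B there exists a vertex v outside A ∪ B adjacent to
every element of A and to no element of B. -/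
def OmegaSaturated {X : Type*} (E : X → X → Prop) : Prop :=
  ∀ A B : Finset X, Disjoint A B →
    ∃ v : X, v ∉ A ∧ v ∉ B ∧ (∀ a ∈ A, E v a) ∧ (∀ b ∈ B, ¬ E v b)

/-- No compact graph is ω-saturated: if X is a nonempty compact
Hausdorff space and E is a closed reflexive symmetric relation on X, then
(X,E) is not ω-saturated. Moreover, no open graph on a compact space is
ω-saturated: if E is an open symmetric subset of X × X disjoint from the
diagonal, then the graph whose edge relation is E ∪ {(x,x)} is not
ω-saturated. -/
theorem stmt_5 :
    (∀ (X : Type) [TopologicalSpace X] [CompactSpace X] [T2Space X] [Nonempty X]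
      (E : X → X → Prop),
      IsClosed {p : X × X | E p.1 p.2} →
      (∀ x, E x x) → (∀ x y, E x y → E y x) →
      ¬ OmegaSaturated E) ∧
    (∀ (X : Type) [TopologicalSpace X] [CompactSpace X] [T2Space X] [Nonempty X]
      (E : X → X → Prop),
      IsOpen {p : X × X | E p.1 p.2} →
      (∀ x y, E x y → E y x) → (∀ x, ¬ E x x) →
      ¬ OmegaSaturated (fun x y => E x y ∨ x = y)) := by
  constructor
  · intro X _ _ _ _ E hEclosed _ hsymm hsat
    have hopen : ∀ b : X, IsOpen {v : X | ¬ E v b} := by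
      intro b
      have hc : Continuous (fun v : X => (v, b)) := continuous_id.prodMk continuous_const
      exact hEclosed.isOpen_compl.preimage hc
    have hcover : (Set.univ : Set X) ⊆ ⋃ b : X, {v : X | ¬ E v b} := by
      intro v _
      by_contra h
      simp only [Set.mem_iUnion, Set.mem_setOf_eq, not_exists, not_not] at h
      obtain ⟨w, _, _, _, hw4⟩ := hsat ∅ {v} (by simp)
      exact hw4 v (Finset.mem_singleton_self v) (hsymm v w (h w))
    obtain ⟨t, ht⟩ := isCompact_univ.elim_finite_subcover _ hopen hcover
    obtain ⟨v, _, _, hv3, _⟩ := hsat t ∅ (by simp)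
    have hv := ht (Set.mem_univ v)
    simp only [Set.mem_iUnion, Set.mem_setOf_eq] at hv
    obtain ⟨b, hb, hnb⟩ := hv
    exact hnb (hv3 b hb)
  · intro X _ _ _ _ E hEopen hsymm _ hsat
    have hopen : ∀ a : X, IsOpen {v : X | E v a} := fun a =>
      hEopen.preimage (continuous_id.prodMk continuous_const)
    have hcover : (Set.univ : Set X) ⊆ ⋃ a : X, {v : X | E v a} := by
      intro v _
      obtain ⟨w, hw1, _, hw3, _⟩ := hsat {v} ∅ (by simp)
      rcases hw3 v (Finset.mem_singleton_self v) with h | h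
      · exact Set.mem_iUnion.2 ⟨w, hsymm w v h⟩
      · exact absurd (Finset.mem_singleton.2 h) hw1
    obtain ⟨t, ht⟩ := isCompact_univ.elim_finite_subcover _ hopen hcover
    obtain ⟨v, _, _, _, hv4⟩ := hsat ∅ t (by simp)
    have hv := ht (Set.mem_univ v)
    simp only [Set.mem_iUnion, Set.mem_setOf_eq] at hv
    obtain ⟨a, ha, hEa⟩ := hv
    exact hv4 a ha (Or.inl hEa)
end

section
/- Let G = (V,E) be a profinite graph satisfying property (⋆). Then G contains no path of length greater than one: there are no pairwise distinct vertices a, b, c ∈ V with (a,b) ∈ E and (b,c) ∈ E. -/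
/-!
Suppose `a - b - c` is a path of three distinct vertices. Separate them by clopen sets to obtain a
continuous quotient map `f` onto a finite graph `S` in which `f a`, `f b`, `f c` are distinct.
Split the vertex `f b` of `S` into two non-adjacent copies, one keeping all edges except the one
to `f c`, the other carrying only the edge to `f c`; the resulting graph `T` maps back onto `S`
by a quotient map. A lift `g : G → T` of `f` as in (⋆) must send `b` to one of the two copies,
and either choice breaks one of the edges `a - b`, `b - c`.
-/

/-- A map `f` is a quotient map of graphs from `(A, EA)` to `(B, EB)`: it is
surjective, edge-preserving, and strict (every adjacent pair in the target
lifts to an adjacent pair in the source). -/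
def GraphQuotient {A B : Type*} (EA : A → A → Prop) (EB : B → B → Prop)
    (f : A → B) : Prop :=
  Function.Surjective f ∧ (∀ x y, EA x y → EB (f x) (f y)) ∧
    ∀ a b, EB a b → ∃ x y, EA x y ∧ f x = a ∧ f y = b

/-- Property (⋆) for a topological graph `(V, E)`: for all nonempty finite
graphs S, T, every continuous (equivalently, locally constant, since S is
finite discrete) quotient map f : V → S and every quotient map q : T → S,
there is a continuous quotient map g : V → T with q ∘ g = f. -/
def StarProp {V : Type*} [TopologicalSpace V] (E : V → V → Prop) : Prop :=
  ∀ (S T : Type) (_ : Finite S) (_ : Nonempty S) (_ : Finite T) (_ : Nonempty T)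
    (ES : S → S → Prop) (ET : T → T → Prop),
    (∀ s, ES s s) → (∀ a b, ES a b → ES b a) →
    (∀ t, ET t t) → (∀ a b, ET a b → ET b a) →
    ∀ f : V → S, IsLocallyConstant f → GraphQuotient E ES f →
    ∀ q : T → S, GraphQuotient ET ES q →
    ∃ g : V → T, IsLocallyConstant g ∧ GraphQuotient E ET g ∧ q ∘ g = f

theorem graphQuotient_map_self {A B : Type*} (EA : A → A → Prop) {f : A → B}
    (hf : Function.Surjective f) : GraphQuotient EA (Relation.Map EA f f) f :=
  ⟨hf, fun x y h => ⟨x, y, h, rfl, rfl⟩, fun _ _ h => h⟩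

theorem exists_isLocallyConstant_ne {X : Type*} [TopologicalSpace X] [TotallySeparatedSpace X]
    {x y : X} (h : x ≠ y) : ∃ f : X → Fin 2, IsLocallyConstant f ∧ f x ≠ f y := by
  classical
  obtain ⟨U, hU, hx, hy⟩ := exists_isClopen_of_totally_separated h
  refine ⟨LocallyConstant.ofIsClopen hU, LocallyConstant.isLocallyConstant _, ?_⟩
  simp [LocallyConstant.ofIsClopen, hx, show y ∉ U from hy]

section SplitVertex

variable {S : Type*} (ES : S → S → Prop) (s u : S)

def splitVertexRel : Option S → Option S → Prop
  | some x, some y => ES x y ∧ ¬(x = s ∧ y = u) ∧ ¬(x = u ∧ y = s)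
  | none, none => True
  | none, some y => y = u
  | some x, none => x = u

variable {ES s u}

theorem splitVertexRel_refl (hrefl : ∀ x, ES x x) (hsu : s ≠ u) :
    ∀ o, splitVertexRel ES s u o o
  | none => trivial
  | some x => ⟨hrefl x, fun h => hsu (h.1.symm.trans h.2), fun h => hsu (h.2.symm.trans h.1)⟩

theorem splitVertexRel_symm (hsymm : ∀ x y, ES x y → ES y x) :
    ∀ o o', splitVertexRel ES s u o o' → splitVertexRel ES s u o' o
  | none, none, _ => trivial
  | none, some _, h => h
  | some _, none, h => h
  | some _, some _, ⟨h, h₁, h₂⟩ =>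
    ⟨hsymm _ _ h, fun h' => h₂ h'.symm, fun h' => h₁ h'.symm⟩

theorem graphQuotient_getD_splitVertexRel (hrefl : ∀ x, ES x x)
    (hsymm : ∀ x y, ES x y → ES y x) (hsu : ES s u) :
    GraphQuotient (splitVertexRel ES s u) ES (·.getD s) := by
  refine ⟨fun x => ⟨some x, rfl⟩, ?_, fun x y hxy => ?_⟩
  · rintro (_ | x) (_ | y) h <;> simp only [splitVertexRel] at h
    · exact hrefl s
    · exact h ▸ hsu
    · exact h ▸ hsymm _ _ hsu
    · exact h.1
  · by_cases h₁ : x = s ∧ y = u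
    · exact ⟨none, some u, rfl, h₁.1.symm, h₁.2.symm⟩
    by_cases h₂ : x = u ∧ y = s
    · exact ⟨some u, none, rfl, h₂.1.symm, h₂.2.symm⟩
    exact ⟨some x, some y, ⟨hxy, h₁, h₂⟩, rfl, rfl⟩

end SplitVertex

namespace StarProp

variable {V : Type*} [TopologicalSpace V] {E : V → V → Prop}

theorem false_of_graphQuotient_path (hstar : StarProp E) {S : Type} [Finite S]
    {ES : S → S → Prop} (hrefl : ∀ s, ES s s) (hsymm : ∀ x y, ES x y → ES y x)
    {f : V → S} (hf : IsLocallyConstant f) (hquot : GraphQuotient E ES f) {a b c : V}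
    (hab : E a b) (hbc : E b c) (hfab : f a ≠ f b) (hfbc : f b ≠ f c) (hfac : f a ≠ f c) :
    False := by
  have : Nonempty S := ⟨f a⟩
  obtain ⟨g, -, ⟨-, hg, -⟩, hgf⟩ :=
    hstar S (Option S) ‹_› ‹_› inferInstance inferInstance ES
      (splitVertexRel ES (f b) (f c)) hrefl hsymm (splitVertexRel_refl hrefl hfbc)
      (splitVertexRel_symm hsymm) f hf hquot (·.getD (f b))
      (graphQuotient_getD_splitVertexRel hrefl hsymm (hquot.2.1 _ _ hbc))
  have lift_eq {x : V} (hx : f x ≠ f b) : g x = some (f x) := by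
    have := congrFun hgf x
    cases hgx : g x with
    | none => exact absurd (by simpa [hgx] using this) hx.symm
    | some y => simpa [hgx] using this
  have hga := lift_eq hfab
  have hgc := lift_eq hfbc.symm
  cases hgb : g b with
  | none =>
    have hab' := hg _ _ hab
    rw [hga, hgb] at hab'
    exact hfac hab'
  | some y =>
    have hy : y = f b := by simpa [hgb] using congrFun hgf b
    have hbc' := hg _ _ hbc
    rw [hgb, hgc, hy] at hbc'
    exact hbc'.2.1 ⟨rfl, rfl⟩

theorem false_of_isLocallyConstant_path (hstar : StarProp E) (hrefl : ∀ x, E x x)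
    (hsymm : ∀ x y, E x y → E y x) {S : Type} [Finite S] {f : V → S}
    (hf : IsLocallyConstant f) {a b c : V} (hab : E a b) (hbc : E b c) (hfab : f a ≠ f b)
    (hfbc : f b ≠ f c) (hfac : f a ≠ f c) : False := by
  set f' := Set.rangeFactorization f
  have hf' : IsLocallyConstant f' := (IsLocallyConstant.iff_eventually_eq _).2 fun x =>
    (hf.eventually_eq x).mono fun _ hy => Subtype.ext hy
  refine hstar.false_of_graphQuotient_path (ES := Relation.Map E f' f')
    (fun ⟨_, x, hx⟩ => ⟨x, x, hrefl x, Subtype.ext hx, Subtype.ext hx⟩)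
    (fun _ _ ⟨x, y, h, hx, hy⟩ => ⟨y, x, hsymm _ _ h, hy, hx⟩) hf'
    (graphQuotient_map_self E Set.rangeFactorization_surjective) hab hbc
    (fun h => hfab (congrArg Subtype.val h)) (fun h => hfbc (congrArg Subtype.val h))
    (fun h => hfac (congrArg Subtype.val h))

end StarProp

theorem stmt_6_general {V : Type*} [TopologicalSpace V] [CompactSpace V]
    [TopologicalSpace.MetrizableSpace V] [TotallyDisconnectedSpace V]
    (E : V → V → Prop)
    (hrefl : ∀ x, E x x)
    (hsymm : ∀ x y, E x y → E y x)
    (hstar : StarProp E) :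
    ∀ a b c : V, a ≠ b → b ≠ c → a ≠ c → E a b → E b c → False := by
  intro a b c hab hbc hac hEab hEbc
  obtain ⟨f₁, hf₁, hf₁ab⟩ := exists_isLocallyConstant_ne hab
  obtain ⟨f₂, hf₂, hf₂bc⟩ := exists_isLocallyConstant_ne hbc
  obtain ⟨f₃, hf₃, hf₃ac⟩ := exists_isLocallyConstant_ne hac
  exact hstar.false_of_isLocallyConstant_path hrefl hsymm (f := fun x => (f₁ x, f₂ x, f₃ x))
    (hf₁.prodMk (hf₂.prodMk hf₃)) hEab hEbc (fun h => hf₁ab (congrArg Prod.fst h))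
    (fun h => hf₂bc (congrArg (·.2.1) h)) (fun h => hf₃ac (congrArg (·.2.2) h))

/-- Let G = (V,E) be a profinite graph satisfying property (⋆).
Then G contains no path of length greater than one: there are no pairwise
distinct vertices a, b, c with (a,b) ∈ E and (b,c) ∈ E. -/
theorem stmt_6 {V : Type*} [TopologicalSpace V] [CompactSpace V]
    [TopologicalSpace.MetrizableSpace V] [TotallyDisconnectedSpace V] [Nonempty V]
    (E : V → V → Prop)
    (hclosed : IsClosed {p : V × V | E p.1 p.2})
    (hrefl : ∀ x, E x x)
    (hsymm : ∀ x y, E x y → E y x)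
    (hstar : StarProp E) :
    ∀ a b c : V, a ≠ b → b ≠ c → a ≠ c → E a b → E b c → False :=
  stmt_6_general E hrefl hsymm hstar
end

section
/- Let G = (V,E) be a profinite graph satisfying property (⋆). Then the edge relation E is a closed equivalence relation on V, and the quotient topological space V/E is homeomorphic to the Cantor space 2^ℕ. -/
set_option linter.unusedSectionVars false

section Aux

open Set TopologicalSpace

variable {V : Type*} [TopologicalSpace V] [CompactSpace V]
    [TopologicalSpace.MetrizableSpace V] [TotallyDisconnectedSpace V] [Nonempty V]

/-- In a second countable space, there are countably many clopen sets. -/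
lemma countable_clopens : {A : Set V | IsClopen A}.Countable := by
  obtain ⟨B, hBc, -, hB⟩ := TopologicalSpace.exists_countable_basis V
  have hsub : {A : Set V | IsClopen A} ⊆ Set.sUnion '' {t | t.Finite ∧ t ⊆ B} := by
    intro A hA
    obtain ⟨S, hSB, rfl⟩ := hB.open_eq_sUnion hA.isOpen
    have hcomp : IsCompact (⋃₀ S) := hA.isClosed.isCompact
    have hcover : ⋃₀ S ⊆ ⋃ s ∈ S, id s := by rw [sUnion_eq_biUnion]; exact fun x hx => hx
    obtain ⟨t, htS, htfin, htcover⟩ := hcomp.elim_finite_subcover_image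
      (fun s hs => hB.isOpen (hSB hs)) hcover
    refine ⟨t, ⟨htfin, htS.trans hSB⟩, Set.Subset.antisymm (sUnion_mono htS) ?_⟩
    intro x hx
    have := htcover hx
    simpa [sUnion_eq_biUnion] using this
  exact ((Set.countable_setOf_finite_subset hBc).image _).mono hsub


variable {E : V → V → Prop}

lemma sep_clopen (hclosed : IsClosed {p : V × V | E p.1 p.2}) (hrefl : ∀ x, E x x)
    {a c : V} (h : ¬ E a c) :
    ∃ U W : Set V, IsClopen U ∧ IsClopen W ∧ a ∈ U ∧ c ∈ W ∧
      (∀ x, x ∈ U → x ∉ W) ∧ (∀ x ∈ U, ∀ y ∈ W, ¬ E x y) := by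
  have hb : IsTopologicalBasis {s : Set V | IsClopen s} := isTopologicalBasis_isClopen
  have hb2 := hb.prod hb
  have hopen : IsOpen {p : V × V | E p.1 p.2}ᶜ := hclosed.isOpen_compl
  have hmem : (a, c) ∈ {p : V × V | E p.1 p.2}ᶜ := h
  obtain ⟨s, hs, hacs, hsub⟩ := hb2.exists_subset_of_mem_open hmem hopen
  obtain ⟨U, hU, W, hW, rfl⟩ := hs
  have haU : a ∈ U := hacs.1
  have hcW : c ∈ W := hacs.2
  have hnoE : ∀ x ∈ U, ∀ y ∈ W, ¬ E x y := by
    intro x hx y hy hE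
    exact hsub (Set.mk_mem_prod hx hy) hE
  have haW : a ∉ W := fun hw => hnoE a haU a hw (hrefl a)
  have hcU : c ∉ U := fun hu => hnoE c hu c hcW (hrefl c)
  refine ⟨U \ W, W \ U, hU.diff hW, hW.diff hU, ⟨haU, haW⟩, ⟨hcW, hcU⟩, ?_, ?_⟩
  · rintro x ⟨hxU, hxW⟩ ⟨hxW', _⟩; exact hxW hxW'
  · rintro x ⟨hxU, -⟩ y ⟨hyW, -⟩; exact hnoE x hxU y hyW

/-- Saturated clopen separation: if `¬ E a c` there is a clopen set, saturated
under `E`, containing `a` but not `c`. -/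
lemma sat_sep (hclosed : IsClosed {p : V × V | E p.1 p.2}) (hrefl : ∀ x, E x x)
    (hsymm : ∀ x y, E x y → E y x) (hstar : StarProp E)
    {a c : V} (h : ¬ E a c) :
    ∃ D : Set V, IsClopen D ∧ (∀ x y, E x y → (x ∈ D ↔ y ∈ D)) ∧ a ∈ D ∧ c ∉ D := by
  classical
  obtain ⟨U, W, hU, hW, haU, hcW, hdisj, hnoE⟩ := sep_clopen hclosed hrefl h
  by_cases hR : ∀ z : V, z ∈ U ∨ z ∈ W
  · -- no third piece: U itself is saturated
    refine ⟨U, hU, ?_, haU, fun hcU => hdisj c hcU hcW⟩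
    have key : ∀ x y, E x y → x ∈ U → y ∈ U := by
      intro x y hE hx
      rcases hR y with hy | hy
      · exact hy
      · exact absurd hE (hnoE x hx y hy)
    intro x y hE
    exact ⟨key x y hE, key y x (hsymm x y hE)⟩
  · push_neg at hR
    obtain ⟨b, hbU, hbW⟩ := hR
    set f : V → Fin 3 := fun x => if x ∈ U then 0 else if x ∈ W then 2 else 1 with hf
    have hf0 : ∀ x, f x = 0 ↔ x ∈ U := by
      intro x; by_cases h1 : x ∈ U <;> by_cases h2 : x ∈ W <;> simp [hf, h1, h2]
    have hf2 : ∀ x, f x = 2 ↔ x ∈ W := by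
      intro x
      by_cases h1 : x ∈ U
      · have h2 : x ∉ W := hdisj x h1
        simp [hf, h1, h2]
      · by_cases h2 : x ∈ W <;> simp [hf, h1, h2]
    have hf1 : ∀ x, f x = 1 ↔ (x ∉ U ∧ x ∉ W) := by
      intro x; by_cases h1 : x ∈ U <;> by_cases h2 : x ∈ W <;> simp [hf, h1, h2]
    set ES : Fin 3 → Fin 3 → Prop := fun s t => ∃ x y, E x y ∧ f x = s ∧ f y = t with hES
    have hESrefl : ∀ s, ES s s := by
      intro s
      fin_cases s
      · exact ⟨a, a, hrefl a, (hf0 a).mpr haU, (hf0 a).mpr haU⟩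
      · exact ⟨b, b, hrefl b, (hf1 b).mpr ⟨hbU, hbW⟩, (hf1 b).mpr ⟨hbU, hbW⟩⟩
      · exact ⟨c, c, hrefl c, (hf2 c).mpr hcW, (hf2 c).mpr hcW⟩
    have hESsymm : ∀ s t, ES s t → ES t s := by
      rintro s t ⟨x, y, hE, hx, hy⟩; exact ⟨y, x, hsymm x y hE, hy, hx⟩
    have hES02 : ¬ ES 0 2 := by
      rintro ⟨x, y, hE, hx, hy⟩
      exact hnoE x ((hf0 x).mp hx) y ((hf2 y).mp hy) hE
    have hES20 : ¬ ES 2 0 := fun hE => hES02 (hESsymm _ _ hE)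
    have hflc : IsLocallyConstant f := by
      rw [IsLocallyConstant.iff_isOpen_fiber]
      intro y
      fin_cases y
      · show IsOpen (f ⁻¹' {0})
        have : f ⁻¹' {0} = U := by ext x; exact hf0 x
        rw [this]; exact hU.isOpen
      · show IsOpen (f ⁻¹' {1})
        have : f ⁻¹' {1} = (U ∪ W)ᶜ := by
          ext x; simpa [not_or] using hf1 x
        rw [this]; exact (hU.union hW).compl.isOpen
      · show IsOpen (f ⁻¹' {2})
        have : f ⁻¹' {2} = W := by ext x; exact hf2 x
        rw [this]; exact hW.isOpen
    have hfq : GraphQuotient E ES f := by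
      refine ⟨?_, ?_, ?_⟩
      · intro s
        fin_cases s
        · exact ⟨a, (hf0 a).mpr haU⟩
        · exact ⟨b, (hf1 b).mpr ⟨hbU, hbW⟩⟩
        · exact ⟨c, (hf2 c).mpr hcW⟩
      · intro x y hE; exact ⟨x, y, hE, rfl, rfl⟩
      · intro s t hst; exact hst
    -- T = Fin 4 : 0 = U-part, 1 = left copy of rest, 2 = W-part, 3 = right copy of rest
    set q : Fin 4 → Fin 3 := ![0, 1, 2, 1] with hq
    set side : Fin 4 → Bool := ![true, true, false, false] with hside
    set ET : Fin 4 → Fin 4 → Prop :=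
      fun s t => ES (q s) (q t) ∧ side s = side t with hET
    have hETrefl : ∀ t, ET t t := fun t => ⟨hESrefl (q t), rfl⟩
    have hETsymm : ∀ s t, ET s t → ET t s := by
      rintro s t ⟨h1, h2⟩; exact ⟨hESsymm _ _ h1, h2.symm⟩
    have hqq : GraphQuotient ET ES q := by
      refine ⟨?_, ?_, ?_⟩
      · intro s
        fin_cases s
        · exact ⟨0, rfl⟩
        · exact ⟨1, rfl⟩
        · exact ⟨2, rfl⟩
      · intro x y hxy; exact hxy.1
      · intro s t hst
        fin_cases s <;> fin_cases t
        · exact ⟨0, 0, ⟨hst, rfl⟩, rfl, rfl⟩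
        · exact ⟨0, 1, ⟨hst, rfl⟩, rfl, rfl⟩
        · exact absurd hst hES02
        · exact ⟨1, 0, ⟨hst, rfl⟩, rfl, rfl⟩
        · exact ⟨1, 1, ⟨hst, rfl⟩, rfl, rfl⟩
        · exact ⟨3, 2, ⟨hst, rfl⟩, rfl, rfl⟩
        · exact absurd hst hES20
        · exact ⟨2, 3, ⟨hst, rfl⟩, rfl, rfl⟩
        · exact ⟨2, 2, ⟨hst, rfl⟩, rfl, rfl⟩
    obtain ⟨g, hglc, hgq, hqg⟩ := hstar (Fin 3) (Fin 4) inferInstance inferInstance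
      inferInstance inferInstance ES ET hESrefl hESsymm hETrefl hETsymm
      f hflc hfq q hqq
    refine ⟨g ⁻¹' {t | side t = true}, ?_, ?_, ?_, ?_⟩
    · constructor
      · have : g ⁻¹' {t | side t = true} = (g ⁻¹' {t | side t = true}ᶜ)ᶜ := by
          simp [Set.preimage_compl]
        rw [this]
        exact (hglc _).isClosed_compl
      · exact hglc _
    · intro x y hE
      have := (hgq.2.1 x y hE).2
      constructor <;> intro hx <;> simp only [Set.mem_preimage, Set.mem_setOf_eq] at *
      · rw [← this]; exact hx
      · rw [this]; exact hx
    · have hfa : f a = 0 := (hf0 a).mpr haU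
      have : q (g a) = 0 := by
        have := congrFun hqg a
        simp only [Function.comp_apply] at this
        rw [this, hfa]
      have hkey : ∀ t : Fin 4, q t = 0 → side t = true := by decide
      exact hkey _ this
    · have hfc : f c = 2 := (hf2 c).mpr hcW
      have : q (g c) = 2 := by
        have := congrFun hqg c
        simp only [Function.comp_apply] at this
        rw [this, hfc]
      have hkey : ∀ t : Fin 4, q t = 2 → side t = false := by decide
      intro hmem
      simp only [Set.mem_preimage, Set.mem_setOf_eq] at hmem
      rw [hkey _ this] at hmem
      exact Bool.false_ne_true hmem

/-- One refinement step: given a locally constant `E`-invariant surjection onto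
`Fin n → Bool` and a saturated clopen set `D`, produce a finer one splitting
every fiber into two and refining `D`. -/
lemma step_ex (hrefl : ∀ x, E x x) (hstar : StarProp E) {n : ℕ}
    (g : V → (Fin n → Bool)) (hlc : IsLocallyConstant g)
    (hinv : ∀ x y, E x y → g x = g y) (hsurj : Function.Surjective g)
    (D : Set V) (hD : IsClopen D) (hsat : ∀ x y, E x y → (x ∈ D ↔ y ∈ D)) :
    ∃ g' : V → ((Fin n → Bool) × Bool), IsLocallyConstant g' ∧
      (∀ x y, E x y → g' x = g' y) ∧ Function.Surjective g' ∧
      (∀ x, (g' x).1 = g x) ∧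
      (∀ x y, g' x = g' y → (x ∈ D ↔ y ∈ D)) := by
  classical
  set χ : V → Bool := fun x => if x ∈ D then true else false with hχ
  have hχlc : IsLocallyConstant χ := by
    rw [IsLocallyConstant.iff_isOpen_fiber]
    intro y
    cases y
    · have : χ ⁻¹' {false} = Dᶜ := by
        ext x; by_cases hx : x ∈ D <;> simp [hχ, hx]
      rw [this]; exact hD.compl.isOpen
    · have : χ ⁻¹' {true} = D := by
        ext x; by_cases hx : x ∈ D <;> simp [hχ, hx]
      rw [this]; exact hD.isOpen
  set fv : V → ((Fin n → Bool) × Bool) := fun x => (g x, χ x) with hfv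
  have hfvlc : IsLocallyConstant fv := hlc.prodMk hχlc
  have hfvinv : ∀ x y, E x y → fv x = fv y := by
    intro x y hE
    have h1 : g x = g y := hinv x y hE
    have h2 : χ x = χ y := by
      have := hsat x y hE
      by_cases hx : x ∈ D
      · simp [hχ, hx, this.mp hx]
      · have : y ∉ D := fun hy => hx (this.mpr hy)
        simp [hχ, hx, this]
    simp [hfv, h1, h2]
  set S := {s : (Fin n → Bool) × Bool // s ∈ Set.range fv} with hS
  haveI : Finite S := Subtype.finite
  haveI : Nonempty S := ⟨⟨fv (Classical.arbitrary V), Set.mem_range_self _⟩⟩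
  set f' : V → S := fun x => ⟨fv x, Set.mem_range_self x⟩ with hf'
  have hf'lc : IsLocallyConstant f' := by
    intro s
    have : f' ⁻¹' s = fv ⁻¹' (Subtype.val '' s) := by
      ext x
      simp only [Set.mem_preimage, Set.mem_image, hf']
      constructor
      · intro hx; exact ⟨⟨fv x, Set.mem_range_self x⟩, hx, rfl⟩
      · rintro ⟨⟨p, hp⟩, hps, hpe⟩
        have heq : (⟨p, hp⟩ : S) = ⟨fv x, Set.mem_range_self x⟩ := Subtype.ext hpe
        rwa [heq] at hps
    rw [this]; exact hfvlc _
  have hf'q : GraphQuotient E (@Eq S) f' := by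
    refine ⟨?_, ?_, ?_⟩
    · rintro ⟨p, x, rfl⟩; exact ⟨x, rfl⟩
    · intro x y hE; exact Subtype.ext (hfvinv x y hE)
    · rintro s t rfl
      obtain ⟨x, hx⟩ := s.2
      exact ⟨x, x, hrefl x, Subtype.ext hx, Subtype.ext hx⟩
  have key : ∀ p : (Fin n → Bool) × Bool, p ∉ Set.range fv → (p.1, !p.2) ∈ Set.range fv := by
    intro p hp
    obtain ⟨x, hx⟩ := hsurj p.1
    refine ⟨x, ?_⟩
    have hne : χ x ≠ p.2 := by
      intro heq
      exact hp ⟨x, by rw [hfv]; simp only; rw [hx, heq]⟩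
    have : χ x = !p.2 := by
      revert hne; cases hxb : χ x <;> cases hpb : p.2 <;> simp
    rw [hfv]; simp only; rw [hx, this]
  set q : ((Fin n → Bool) × Bool) → S :=
    fun p => if h : p ∈ Set.range fv then ⟨p, h⟩ else ⟨(p.1, !p.2), key p h⟩ with hqdef
  have hq_pos : ∀ (p) (h : p ∈ Set.range fv), q p = ⟨p, h⟩ := by
    intro p h; exact dif_pos h
  have hq_neg : ∀ (p) (h : p ∉ Set.range fv), q p = ⟨(p.1, !p.2), key p h⟩ := by
    intro p h; exact dif_neg h
  have hqfst : ∀ p, (q p).1.1 = p.1 := by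
    intro p
    by_cases h : p ∈ Set.range fv
    · rw [hq_pos p h]
    · rw [hq_neg p h]
  have hqq : GraphQuotient (@Eq ((Fin n → Bool) × Bool)) (@Eq S) q := by
    refine ⟨?_, ?_, ?_⟩
    · rintro ⟨p, hp⟩
      exact ⟨p, hq_pos p hp⟩
    · rintro x y rfl; rfl
    · rintro s t rfl
      have hqs : q (s : (Fin n → Bool) × Bool) = s := (hq_pos _ s.2).trans rfl
      exact ⟨s, s, rfl, hqs, hqs⟩
  obtain ⟨g', hg'lc, hg'q, hqg'⟩ := hstar S ((Fin n → Bool) × Bool) inferInstance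
    inferInstance inferInstance inferInstance (@Eq S) (@Eq _)
    (fun s => rfl) (fun a b h => h.symm) (fun t => rfl) (fun a b h => h.symm)
    f' hf'lc hf'q q hqq
  have hcomp : ∀ x, q (g' x) = f' x := fun x => congrFun hqg' x
  have hfst : ∀ x, (g' x).1 = g x := by
    intro x
    have h1 := congrArg (fun s => (Subtype.val s).1) (hcomp x)
    rw [hqfst (g' x)] at h1
    exact h1
  refine ⟨g', hg'lc, hg'q.2.1, hg'q.1, hfst, ?_⟩
  intro x y hxy
  have : f' x = f' y := by rw [← hcomp x, ← hcomp y, hxy]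
  have hfveq : fv x = fv y := congrArg Subtype.val this
  have hχeq : χ x = χ y := congrArg Prod.snd hfveq
  by_cases hx : x ∈ D
  · constructor
    · intro _
      by_contra hy
      rw [hχ] at hχeq
      simp [hx, hy] at hχeq
    · intro _; exact hx
  · constructor
    · intro h'; exact absurd h' hx
    · intro hy
      by_contra h'
      rw [hχ] at hχeq
      simp [hx, hy] at hχeq

/-- snoc version of the refinement step. -/
lemma step_ex' (hrefl : ∀ x, E x x) (hstar : StarProp E) {n : ℕ}
    (g : V → (Fin n → Bool)) (hlc : IsLocallyConstant g)
    (hinv : ∀ x y, E x y → g x = g y) (hsurj : Function.Surjective g)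
    (D : Set V) (hD : IsClopen D) (hsat : ∀ x y, E x y → (x ∈ D ↔ y ∈ D)) :
    ∃ g' : V → (Fin (n + 1) → Bool), IsLocallyConstant g' ∧
      (∀ x y, E x y → g' x = g' y) ∧ Function.Surjective g' ∧
      (∀ x, Fin.init (g' x) = g x) ∧
      (∀ x y, g' x = g' y → (x ∈ D ↔ y ∈ D)) := by
  obtain ⟨g'', hlc'', hinv'', hsurj'', hfst'', href''⟩ :=
    step_ex hrefl hstar g hlc hinv hsurj D hD hsat
  refine ⟨fun x => (Fin.snoc (g'' x).1 (g'' x).2 : Fin (n + 1) → Bool), ?_, ?_, ?_, ?_, ?_⟩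
  · exact hlc''.comp fun p : (Fin n → Bool) × Bool => (Fin.snoc p.1 p.2 : Fin (n + 1) → Bool)
  · intro x y hE
    show (Fin.snoc (g'' x).1 (g'' x).2 : Fin (n + 1) → Bool) =
      (Fin.snoc (g'' y).1 (g'' y).2 : Fin (n + 1) → Bool)
    rw [hinv'' x y hE]
  · intro w
    obtain ⟨x, hx⟩ := hsurj'' (Fin.init w, w (Fin.last n))
    refine ⟨x, ?_⟩
    show (Fin.snoc (g'' x).1 (g'' x).2 : Fin (n + 1) → Bool) = w
    rw [hx]
    exact Fin.snoc_init_self w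
  · intro x
    show Fin.init (Fin.snoc (g'' x).1 (g'' x).2 : Fin (n + 1) → Bool) = g x
    rw [Fin.init_snoc, hfst'']
  · intro x y hxy
    apply href'' x y
    have hxy' : (Fin.snoc (g'' x).1 (g'' x).2 : Fin (n + 1) → Bool) =
        (Fin.snoc (g'' y).1 (g'' y).2 : Fin (n + 1) → Bool) := hxy
    have h1 : (g'' x).1 = (g'' y).1 := by
      have := congrArg Fin.init hxy'
      rwa [Fin.init_snoc, Fin.init_snoc] at this
    have h2 : (g'' x).2 = (g'' y).2 := by
      have := congrFun hxy' (Fin.last n)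
      rwa [Fin.snoc_last, Fin.snoc_last] at this
    exact Prod.ext h1 h2

variable (E) in
/-- The data of one stage of the refining sequence of partitions. -/
def AuxStage (n : ℕ) : Type _ :=
  {g : V → (Fin n → Bool) // IsLocallyConstant g ∧ (∀ x y, E x y → g x = g y) ∧
    Function.Surjective g}

variable (E) in
/-- The refining sequence of locally constant `E`-invariant surjections onto
`Fin n → Bool`, successively refining the sets `Den n`. -/
noncomputable def auxChain (hrefl : ∀ x, E x x) (hstar : StarProp E)
    (Den : ℕ → Set V) (hDcl : ∀ n, IsClopen (Den n))
    (hDsat : ∀ n, ∀ x y, E x y → (x ∈ Den n ↔ y ∈ Den n)) : ∀ n, AuxStage E n :=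
  Nat.rec
    ⟨fun _ _ => true, IsLocallyConstant.of_constant _ (fun _ _ => rfl),
      fun _ _ _ => rfl, fun _ => ⟨Classical.arbitrary V, funext fun i => i.elim0⟩⟩
    (fun n s =>
      let e := step_ex' hrefl hstar s.1 s.2.1 s.2.2.1 s.2.2.2 (Den n) (hDcl n) (hDsat n)
      ⟨e.choose, e.choose_spec.1, e.choose_spec.2.1, e.choose_spec.2.2.1⟩)

variable (E) in
lemma auxChain_succ (hrefl : ∀ x, E x x) (hstar : StarProp E)
    (Den : ℕ → Set V) (hDcl : ∀ n, IsClopen (Den n))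
    (hDsat : ∀ n, ∀ x y, E x y → (x ∈ Den n ↔ y ∈ Den n)) (n : ℕ) :
    (∀ x, Fin.init ((auxChain E hrefl hstar Den hDcl hDsat (n + 1)).1 x) =
      (auxChain E hrefl hstar Den hDcl hDsat n).1 x) ∧
    (∀ x y, (auxChain E hrefl hstar Den hDcl hDsat (n + 1)).1 x =
        (auxChain E hrefl hstar Den hDcl hDsat (n + 1)).1 y →
      (x ∈ Den n ↔ y ∈ Den n)) :=
  let s := auxChain E hrefl hstar Den hDcl hDsat n
  let e := step_ex' hrefl hstar s.1 s.2.1 s.2.2.1 s.2.2.2 (Den n) (hDcl n) (hDsat n)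
  ⟨e.choose_spec.2.2.2.1, e.choose_spec.2.2.2.2⟩

end Aux

/-- Let G = (V,E) be a profinite graph satisfying property (⋆).
Then the edge relation E is a closed equivalence relation on V, and the
quotient space V/E is homeomorphic to the Cantor space 2^ℕ. -/
theorem stmt_7 {V : Type*} [TopologicalSpace V] [CompactSpace V]
    [TopologicalSpace.MetrizableSpace V] [TotallyDisconnectedSpace V] [Nonempty V]
    (E : V → V → Prop)
    (hclosed : IsClosed {p : V × V | E p.1 p.2})
    (hrefl : ∀ x, E x x)
    (hsymm : ∀ x y, E x y → E y x)
    (hstar : StarProp E) :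
    IsClosed {p : V × V | E p.1 p.2} ∧ Equivalence E ∧
      Nonempty (Quot E ≃ₜ (ℕ → Bool)) := by
    classical
  have hsep : ∀ {a c : V}, ¬ E a c →
      ∃ D : Set V, IsClopen D ∧ (∀ x y, E x y → (x ∈ D ↔ y ∈ D)) ∧ a ∈ D ∧ c ∉ D :=
    fun h => sat_sep hclosed hrefl hsymm hstar h
  have hequiv : Equivalence E := by
    refine ⟨hrefl, fun {x y} h => hsymm x y h, ?_⟩
    intro x y z hxy hyz
    by_contra hxz
    obtain ⟨D, _, hsat, hxD, hzD⟩ := hsep hxz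
    exact hzD ((hsat y z hyz).mp ((hsat x y hxy).mp hxD))
  refine ⟨hclosed, hequiv, ?_⟩
  -- enumerate the saturated clopen sets
  set 𝒮 : Set (Set V) := {A | IsClopen A ∧ ∀ x y, E x y → (x ∈ A ↔ y ∈ A)} with h𝒮
  have h𝒮c : 𝒮.Countable := Set.Countable.mono (fun A hA => hA.1) countable_clopens
  have h𝒮ne : 𝒮.Nonempty := ⟨Set.univ, isClopen_univ, fun x y _ => Iff.rfl⟩
  obtain ⟨Den, hDen⟩ := h𝒮c.exists_eq_range h𝒮ne
  have hDmem : ∀ n, Den n ∈ 𝒮 := by intro n; rw [hDen]; exact Set.mem_range_self n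
  have hDcl : ∀ n, IsClopen (Den n) := fun n => (hDmem n).1
  have hDsat : ∀ n, ∀ x y, E x y → (x ∈ Den n ↔ y ∈ Den n) := fun n => (hDmem n).2
  set ch := auxChain E hrefl hstar Den hDcl hDsat with hch
  set gg : ∀ n, V → (Fin n → Bool) := fun n => (ch n).1 with hgg
  have hlc : ∀ n, IsLocallyConstant (gg n) := fun n => (ch n).2.1
  have hinv : ∀ n x y, E x y → gg n x = gg n y := fun n => (ch n).2.2.1
  have hsurj : ∀ n, Function.Surjective (gg n) := fun n => (ch n).2.2.2
  have hinit : ∀ n x, Fin.init (gg (n + 1) x) = gg n x :=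
    fun n => (auxChain_succ E hrefl hstar Den hDcl hDsat n).1
  have href : ∀ n x y, gg (n + 1) x = gg (n + 1) y → (x ∈ Den n ↔ y ∈ Den n) :=
    fun n => (auxChain_succ E hrefl hstar Den hDcl hDsat n).2
  set h : V → ℕ → Bool := fun x k => gg (k + 1) x (Fin.last k) with hh
  have hrep : ∀ n (x : V) (i : Fin n), gg n x i = h x i := by
    intro n
    induction n with
    | zero => intro x i; exact i.elim0
    | succ n ih =>
      intro x i
      refine Fin.lastCases ?_ ?_ i
      · rfl
      · intro j
        have h1 : gg (n + 1) x (Fin.castSucc j) = gg n x j := congrFun (hinit n x) j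
        rw [h1, ih x j, Fin.coe_castSucc]
  have hhinv : ∀ x y, E x y → h x = h y := by
    intro x y hE
    funext k
    show gg (k + 1) x (Fin.last k) = gg (k + 1) y (Fin.last k)
    rw [hinv (k + 1) x y hE]
  have hiff : ∀ x y, h x = h y → E x y := by
    intro x y hxyh
    by_contra hE
    obtain ⟨D, hDcl', hDsat', hxD, hyD⟩ := hsep hE
    have hD𝒮 : D ∈ 𝒮 := ⟨hDcl', hDsat'⟩
    rw [hDen] at hD𝒮
    obtain ⟨n, hn⟩ := hD𝒮
    have hgeq : gg (n + 1) x = gg (n + 1) y :=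
      funext fun i => by rw [hrep (n + 1) x i, hrep (n + 1) y i, hxyh]
    have hres := href n x y hgeq
    rw [hn] at hres
    exact hyD (hres.mp hxD)
  have hsurjh : Function.Surjective h := by
    intro σ
    set C : ℕ → Set V := fun n => gg n ⁻¹' {fun i : Fin n => σ i} with hC
    have hCne : ∀ n, (C n).Nonempty := by
      intro n
      obtain ⟨x, hx⟩ := hsurj n (fun i : Fin n => σ i)
      exact ⟨x, by simp only [hC, Set.mem_preimage, Set.mem_singleton_iff, hx]⟩
    have hCcl : ∀ n, IsClosed (C n) := by
      intro n
      rw [← isOpen_compl_iff]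
      have hcc : (C n)ᶜ = gg n ⁻¹' {fun i : Fin n => σ i}ᶜ := by
        rw [hC, Set.preimage_compl]
      rw [hcc]
      exact hlc n _
    have hCsub : ∀ n, C (n + 1) ⊆ C n := by
      intro n x hx
      simp only [hC, Set.mem_preimage, Set.mem_singleton_iff] at hx ⊢
      rw [← hinit n x, hx]
      funext i
      show σ ((Fin.castSucc i) : Fin (n + 1)).val = σ i.val
      rw [Fin.coe_castSucc]
    obtain ⟨x, hx⟩ := IsCompact.nonempty_iInter_of_sequence_nonempty_isCompact_isClosed
      C hCsub hCne ((hCcl 0).isCompact) hCcl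
    refine ⟨x, ?_⟩
    funext k
    have hk := Set.mem_iInter.mp hx (k + 1)
    simp only [hC, Set.mem_preimage, Set.mem_singleton_iff] at hk
    show gg (k + 1) x (Fin.last k) = σ k
    rw [hk]
    rfl
  have hcont : Continuous h :=
    continuous_pi fun k => ((hlc (k + 1)).comp (fun w => w (Fin.last k))).continuous
  set φ : Quot E → (ℕ → Bool) := Quot.lift h hhinv with hφ
  have hφcont : Continuous φ := continuous_quot_lift _ hcont
  have hφbij : Function.Bijective φ := by
    constructor
    · intro u v huv
      induction u using Quot.ind with | _ x => ?_
      induction v using Quot.ind with | _ y => ?_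
      exact Quot.sound (hiff x y huv)
    · intro σ
      obtain ⟨x, hx⟩ := hsurjh σ
      exact ⟨Quot.mk E x, hx⟩
  exact ⟨Continuous.homeoOfEquivCompactToT2 (f := Equiv.ofBijective φ hφbij) hφcont⟩
end

section
/- Let G = (V,E) be a profinite graph satisfying property (⋆). Then the set of isolated vertices of G is a dense Gδ subset of V. -/
open Classical in
lemma dense_aux {V : Type*} [MetricSpace V] [CompactSpace V]
    [TotallyDisconnectedSpace V] [Nonempty V]
    (E : V → V → Prop) (hrefl : ∀ x, E x x) (hsymm : ∀ x y, E x y → E y x)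
    (hstar : StarProp E) (ε : ℝ) (hε : 0 < ε) :
    Dense {x : V | ∀ y, E x y → dist x y < ε} := by
  rw [dense_iff_inter_open]
  rintro U hU ⟨x0, hx0⟩
  obtain ⟨C, hCclopen, hx0C, hCsub⟩ :=
    (isTopologicalBasis_isClopen (X := V)).mem_nhds_iff.mp
      ((hU.inter (Metric.isOpen_ball (x := x0) (ε := ε/2))).mem_nhds
        ⟨hx0, Metric.mem_ball_self (by linarith)⟩)
  have hball : ∀ x ∈ C, ∀ y ∈ C, dist x y < ε := by
    intro x hx y hy
    have h1 := (hCsub hx).2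
    have h2 := (hCsub hy).2
    rw [Metric.mem_ball] at h1 h2
    calc dist x y ≤ dist x x0 + dist x0 y := dist_triangle _ _ _
      _ < ε/2 + ε/2 := by rw [dist_comm x0 y]; linarith
      _ = ε := by ring
  by_cases hcompl : Cᶜ = (∅ : Set V)
  · -- C = univ
    refine ⟨x0, hx0, fun y hy => ?_⟩
    have hyC : y ∈ C := by
      by_contra h; exact absurd (hcompl ▸ h : y ∈ (∅ : Set V)) (Set.notMem_empty y)
    exact hball x0 hx0C y hyC
  · obtain ⟨z0, hz0⟩ := Set.nonempty_iff_ne_empty.mpr hcompl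
    set f : V → Bool := fun x => decide (x ∈ C) with hf
    have hfC : ∀ x, f x = true ↔ x ∈ C := by intro x; simp [hf]
    set ES : Bool → Bool → Prop := fun a b => ∃ x y, E x y ∧ f x = a ∧ f y = b with hES
    set ET : Bool ⊕ Unit → Bool ⊕ Unit → Prop := fun a b =>
      match a, b with
      | .inl a, .inl b => ES a b
      | .inr _, .inr _ => True
      | _, _ => False with hET
    have hESrefl : ∀ a, ES a a := by
      intro a
      cases a with
      | true => exact ⟨x0, x0, hrefl x0, by simp [hfC, hx0C]⟩
      | false => exact ⟨z0, z0, hrefl z0, by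
          have : f z0 = false := by
            rcases Bool.eq_false_or_eq_true (f z0) with h | h
            · exact absurd ((hfC z0).1 h) hz0
            · exact h
          simp [this]⟩
    have hESsymm : ∀ a b, ES a b → ES b a := by
      rintro a b ⟨x, y, hxy, hxa, hyb⟩; exact ⟨y, x, hsymm x y hxy, hyb, hxa⟩
    have hETrefl : ∀ t, ET t t := by rintro (a | u); exacts [hESrefl a, trivial]
    have hETsymm : ∀ a b, ET a b → ET b a := by
      rintro (a | u) (b | v) h
      · exact hESsymm a b h
      · exact h
      · exact h
      · trivial
    have hflc : IsLocallyConstant f := by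
      rw [IsLocallyConstant.iff_isOpen_fiber]
      intro b
      cases b with
      | true =>
        have h : f ⁻¹' {true} = C := by ext x; simp [hf]
        rw [h]; exact hCclopen.isOpen
      | false =>
        have h : f ⁻¹' {false} = Cᶜ := by ext x; simp [hf]
        rw [h]; exact hCclopen.compl.isOpen
    have hfq : GraphQuotient E ES f := by
      refine ⟨?_, fun x y h => ⟨x, y, h, rfl, rfl⟩, fun a b ⟨x, y, h, hx, hy⟩ => ⟨x, y, h, hx, hy⟩⟩
      intro b
      cases b with
      | true => exact ⟨x0, (hfC x0).2 hx0C⟩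
      | false => refine ⟨z0, ?_⟩
                 rcases Bool.eq_false_or_eq_true (f z0) with h | h
                 · exact absurd ((hfC z0).1 h) hz0
                 · exact h
    set q : Bool ⊕ Unit → Bool := Sum.elim id (fun _ => true) with hq
    have hqq : GraphQuotient ET ES q := by
      refine ⟨fun b => ⟨.inl b, rfl⟩, ?_, fun a b h => ⟨.inl a, .inl b, h, rfl, rfl⟩⟩
      rintro (a | u) (b | v) h
      · exact h
      · exact absurd h not_false
      · exact absurd h not_false
      · exact hESrefl true
    obtain ⟨g, hglc, ⟨hgsurj, hgpres, _⟩, hqg⟩ :=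
      hstar Bool (Bool ⊕ Unit) inferInstance inferInstance inferInstance inferInstance
        ES ET hESrefl hESsymm hETrefl hETsymm f hflc hfq q hqq
    obtain ⟨x, hx⟩ := hgsurj (.inr ())
    have hfx : f x = true := by
      have := congrFun hqg x
      simp only [Function.comp_apply, hx, hq] at this
      exact this.symm
    have hxC : x ∈ C := (hfC x).1 hfx
    refine ⟨x, (hCsub hxC).1, fun y hy => ?_⟩
    have hedge : ET (g x) (g y) := hgpres x y hy
    rw [hx] at hedge
    have hgy : g y = .inr () := by
      cases hgy : g y with
      | inl b => rw [hgy] at hedge; exact absurd hedge not_false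
      | inr u => rfl
    have hfy : f y = true := by
      have := congrFun hqg y
      simp only [Function.comp_apply, hgy, hq] at this
      exact this.symm
    exact hball x hxC y ((hfC y).1 hfy)

/-- Let G = (V,E) be a profinite graph satisfying property (⋆).
Then the set of isolated vertices of G is a dense Gδ subset of V. -/
theorem stmt_8 {V : Type*} [TopologicalSpace V] [CompactSpace V]
    [TopologicalSpace.MetrizableSpace V] [TotallyDisconnectedSpace V] [Nonempty V]
    (E : V → V → Prop)
    (hclosed : IsClosed {p : V × V | E p.1 p.2})
    (hrefl : ∀ x, E x x)
    (hsymm : ∀ x y, E x y → E y x)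
    (hstar : StarProp E) :
    Dense {x : V | ∀ y, y ≠ x → ¬ E x y} ∧
      IsGδ {x : V | ∀ y, y ≠ x → ¬ E x y} := by
  letI : MetricSpace V := TopologicalSpace.metrizableSpaceMetric V
  set G : ℕ → Set V := fun n => {x | ∀ y, E x y → dist x y < (1:ℝ)/(n+1)} with hG
  have hIG : {x : V | ∀ y, y ≠ x → ¬ E x y} = ⋂ n, G n := by
    ext x
    simp only [Set.mem_iInter, hG, Set.mem_setOf_eq]
    constructor
    · intro h n y hy
      rcases eq_or_ne y x with rfl | hne
      · rw [dist_self]; positivity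
      · exact absurd hy (h y hne)
    · intro h y hne hxy
      obtain ⟨n, hn⟩ := exists_nat_one_div_lt (dist_pos.2 (Ne.symm hne) : 0 < dist x y)
      exact absurd (h n y hxy) (not_lt.2 hn.le)
  have hopen : ∀ n, IsOpen (G n) := by
    intro n
    have hK : IsClosed {p : V × V | E p.1 p.2 ∧ (1:ℝ)/(n+1) ≤ dist p.1 p.2} :=
      hclosed.inter (isClosed_le continuous_const continuous_dist)
    have himg : G n = (Prod.fst '' {p : V × V | E p.1 p.2 ∧ (1:ℝ)/(n+1) ≤ dist p.1 p.2})ᶜ := by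
      ext x
      simp only [hG, Set.mem_setOf_eq, Set.mem_compl_iff, Set.mem_image, Prod.exists]
      constructor
      · rintro h ⟨a, b, ⟨he, hd⟩, rfl⟩
        exact absurd (h b he) (not_lt.2 hd)
      · intro h y hy
        by_contra hlt
        exact h ⟨x, y, ⟨hy, not_lt.1 hlt⟩, rfl⟩
    rw [himg]
    exact (hK.isCompact.image continuous_fst).isClosed.isOpen_compl
  have hdense : ∀ n, Dense (G n) :=
    fun n => dense_aux E hrefl hsymm hstar _ (by positivity)
  rw [hIG]
  exact ⟨dense_iInter_of_isOpen hopen hdense, .iInter fun n => (hopen n).isGδ⟩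
end

section
/- For every n, the restriction map p_n : G_{n+1} → G_n, p_n(x) = (x(0),…,x(n−1)), is a quotient map of graphs: it is a surjective graph homomorphism from (G_{n+1}, E_{n+1}) to (G_n, E_n), and for every pair a, b adjacent in G_n there exist adjacent x, y in G_{n+1} with p_n(x) = a and p_n(y) = b. -/
/-- The edge relation E_n on G_n = {0,1,2,3}^n: x E_n x for all x, and for
x ≠ y, x E_n y iff either there is l < n with x(k) = y(k) for all k < l,
{x(l), y(l)} = {2,3}, and x(k) = y(k) ∈ {0,1} for all l < k < n; or
{x(0), y(0)} = {0,1} and x(k) = y(k) ∈ {0,1} for all 1 ≤ k < n. -/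
def En (n : ℕ) (x y : Fin n → Fin 4) : Prop :=
  x = y ∨
  (∃ l : Fin n, (∀ k : Fin n, k < l → x k = y k) ∧
    ({x l, y l} : Set (Fin 4)) = {2, 3} ∧
    (∀ k : Fin n, l < k → x k = y k ∧ (x k = 0 ∨ x k = 1))) ∨
  (∃ h : 0 < n, ({x ⟨0, h⟩, y ⟨0, h⟩} : Set (Fin 4)) = {0, 1} ∧
    ∀ k : Fin n, 0 < (k : ℕ) → x k = y k ∧ (x k = 0 ∨ x k = 1))

/-- The restriction map p_n : G_{n+1} → G_n, p_n(x) = (x(0), …, x(n−1)). -/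
def restrictMap (n : ℕ) (x : Fin (n + 1) → Fin 4) : Fin n → Fin 4 :=
  fun k => x k.castSucc

/-- For every n, the restriction map p_n : G_{n+1} → G_n is a
quotient map of graphs: a surjective graph homomorphism from (G_{n+1}, E_{n+1})
to (G_n, E_n) such that every pair a, b adjacent in G_n lifts to an adjacent
pair x, y in G_{n+1} with p_n(x) = a, p_n(y) = b. -/
theorem stmt_9 (n : ℕ) :
    Function.Surjective (restrictMap n) ∧
    (∀ x y : Fin (n + 1) → Fin 4, En (n + 1) x y →
      En n (restrictMap n x) (restrictMap n y)) ∧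
    (∀ a b : Fin n → Fin 4, En n a b →
      ∃ x y : Fin (n + 1) → Fin 4, En (n + 1) x y ∧
        restrictMap n x = a ∧ restrictMap n y = b) := by
  refine ⟨?_, ?_, ?_⟩
  · intro a
    exact ⟨Fin.snoc a 0, funext fun k => by simp [restrictMap]⟩
  · intro x y h
    rcases h with h | ⟨l, h1, h2, h3⟩ | ⟨h0, h2, h3⟩
    · left; rw [h]
    · by_cases hl : (l : ℕ) < n
      · right; left
        refine ⟨⟨l, hl⟩, ?_, ?_, ?_⟩
        · intro k hk
          exact h1 k.castSucc (by simpa [Fin.lt_def] using hk)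
        · have hcast : (⟨(l : ℕ), hl⟩ : Fin n).castSucc = l := by ext; simp
          simpa [restrictMap, hcast] using h2
        · intro k hk
          exact h3 k.castSucc (by simpa [Fin.lt_def] using hk)
      · left
        funext k
        exact h1 k.castSucc (by simp [Fin.lt_def]; omega)
    · rcases Nat.eq_zero_or_pos n with hn | hn
      · left; subst hn; funext k; exact absurd k.2 (by omega)
      · right; right
        refine ⟨hn, ?_, ?_⟩
        · have hcast : (⟨0, hn⟩ : Fin n).castSucc = (⟨0, h0⟩ : Fin (n+1)) := by ext; simp
          simpa [restrictMap, hcast] using h2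
        · intro k hk
          exact h3 k.castSucc (by simpa using hk)
  · intro a b hab
    refine ⟨Fin.snoc a 0, Fin.snoc b 0, ?_,
      funext fun k => by simp [restrictMap], funext fun k => by simp [restrictMap]⟩
    rcases hab with h | ⟨l, h1, h2, h3⟩ | ⟨h0, h2, h3⟩
    · left; rw [h]
    · right; left
      refine ⟨l.castSucc, ?_, ?_, ?_⟩
      · intro k hk
        have hkn : (k : ℕ) < n := lt_of_lt_of_le hk l.2.le
        have hke : k = (⟨(k : ℕ), hkn⟩ : Fin n).castSucc := by ext; simp
        rw [hke, Fin.snoc_castSucc, Fin.snoc_castSucc]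
        exact h1 ⟨k, hkn⟩ (by simpa [Fin.lt_def] using hk)
      · simpa [Fin.snoc_castSucc] using h2
      · intro k hk
        by_cases hkn : (k : ℕ) < n
        · have hke : k = (⟨(k : ℕ), hkn⟩ : Fin n).castSucc := by ext; simp
          rw [hke, Fin.snoc_castSucc, Fin.snoc_castSucc]
          exact h3 ⟨k, hkn⟩ (by simpa [Fin.lt_def] using hk)
        · have hke : k = Fin.last n := by ext; simp; omega
          rw [hke, Fin.snoc_last, Fin.snoc_last]
          exact ⟨rfl, Or.inl rfl⟩
    · right; right
      refine ⟨Nat.succ_pos n, ?_, ?_⟩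
      · have hke : (⟨0, Nat.succ_pos n⟩ : Fin (n+1)) = (⟨0, h0⟩ : Fin n).castSucc := by ext; simp
        rw [hke, Fin.snoc_castSucc, Fin.snoc_castSucc]
        exact h2
      · intro k hk
        by_cases hkn : (k : ℕ) < n
        · have hke : k = (⟨(k : ℕ), hkn⟩ : Fin n).castSucc := by ext; simp
          rw [hke, Fin.snoc_castSucc, Fin.snoc_castSucc]
          exact h3 ⟨k, hkn⟩ (by simpa using hk)
        · have hke : k = Fin.last n := by ext; simp; omega
          rw [hke, Fin.snoc_last, Fin.snoc_last]
          exact ⟨rfl, Or.inl rfl⟩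
end

section
/- A countable graph X is finitely retractable if and only if there is a sequence (r_n) of retractions of X such that each image r_n(X) is finite, r_n ∘ r_m = r_{min(n,m)} for all n, m, and ⋃_n r_n(X) = X. -/
/-- A retraction of a graph `(X, E)`: a graph homomorphism r : X → X that is
the identity on its image. -/
def IsGraphRetraction {X : Type*} (E : X → X → Prop) (r : X → X) : Prop :=
  (∀ x y, E x y → E (r x) (r y)) ∧ ∀ x, r (r x) = r x

/-- A graph `(X, E)` is finitely retractable if for every finite F ⊆ X there
is a retraction r : X → X with finite image containing F. -/
def FinitelyRetractable {X : Type*} (E : X → X → Prop) : Prop :=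
  ∀ F : Finset X, ∃ r : X → X, IsGraphRetraction E r ∧
    (Set.range r).Finite ∧ ↑F ⊆ Set.range r

/-- A countable graph X is finitely retractable if and only if
there is a sequence (r_n) of retractions of X such that each image r_n(X) is
finite, r_n ∘ r_m = r_{min(n,m)} for all n, m, and ⋃_n r_n(X) = X. -/
theorem stmt_12 {X : Type*} [Countable X] (E : X → X → Prop)
    (hrefl : ∀ x, E x x) (hsymm : ∀ x y, E x y → E y x) :
    FinitelyRetractable E ↔
      ∃ r : ℕ → X → X,
        (∀ n, IsGraphRetraction E (r n)) ∧
        (∀ n, (Set.range (r n)).Finite) ∧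
        (∀ n m, r n ∘ r m = r (min n m)) ∧
        (⋃ n, Set.range (r n)) = Set.univ := by
  classical
  constructor
  · intro hFR
    rcases isEmpty_or_nonempty X with hX | hX
    · refine ⟨fun _ => id, fun n => ⟨fun x y h => h, fun x => rfl⟩,
        fun n => Set.toFinite _, fun n m => rfl, ?_⟩
      simp only [Set.range_id, Set.iUnion_const]
    · obtain ⟨e, he⟩ := exists_surjective_nat X
      -- the type of bundled finite retractions
      let T := {f : X → X // IsGraphRetraction E f ∧ (Set.range f).Finite}
      have base : ∃ t : T, e 0 ∈ Set.range t.1 := by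
        obtain ⟨f, h1, h2, h3⟩ := hFR {e 0}
        exact ⟨⟨f, h1, h2⟩, h3 (by simp)⟩
      have step : ∀ (t : T) (n : ℕ), ∃ t' : T,
          Set.range t.1 ⊆ Set.range t'.1 ∧ e n ∈ Set.range t'.1 := by
        intro t n
        obtain ⟨f, h1, h2, h3⟩ := hFR (insert (e n) t.2.2.toFinset)
        refine ⟨⟨f, h1, h2⟩, ?_, h3 (by simp)⟩
        intro y hy
        exact h3 (by simp [Set.Finite.mem_toFinset, hy])
      -- the chain of retractions
      let s : ℕ → T := fun n => Nat.rec base.choose (fun n t => (step t (n+1)).choose) n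
      have hsucc : ∀ n, s (n+1) = (step (s n) (n+1)).choose := fun n => rfl
      have hsub : ∀ n, Set.range (s n).1 ⊆ Set.range (s (n+1)).1 := by
        intro n
        rw [hsucc n]
        exact ((step (s n) (n+1)).choose_spec).1
      have hse : ∀ n, e n ∈ Set.range (s n).1 := by
        intro n
        cases n with
        | zero => exact base.choose_spec
        | succ n => rw [hsucc n]; exact ((step (s n) (n+1)).choose_spec).2
      set A : ℕ → Set X := fun n => Set.range (s n).1 with hA
      have hmono : ∀ m n, m ≤ n → A m ⊆ A n := by
        intro m n hmn
        induction n with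
        | zero =>
          have : m = 0 := by omega
          subst this; exact subset_rfl
        | succ n ih =>
          rcases Nat.lt_or_ge m (n+1) with h | h
          · exact (ih (by omega)).trans (hsub n)
          · have : m = n + 1 := by omega
            subst this; exact subset_rfl
      have hfixA : ∀ n z, z ∈ A n → ∀ j, n ≤ j → (s j).1 z = z := by
        intro n z hz j hj
        obtain ⟨w, hw⟩ := hmono n j hj hz
        rw [← hw]
        exact (s j).2.1.2 w
      -- iterated compositions d n k = s n ∘ s (n+1) ∘ ... ∘ s (n+k)
      let d : ℕ → ℕ → X → X := fun n => Nat.rec (s n).1 (fun k dk x => dk ((s (n+k+1)).1 x))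
      have dS : ∀ n k x, d n (k+1) x = d n k ((s (n+k+1)).1 x) := fun _ _ _ => rfl
      have dedge : ∀ n k x y, E x y → E (d n k x) (d n k y) := by
        intro n k
        induction k with
        | zero => exact fun x y h => (s n).2.1.1 x y h
        | succ k ih => exact fun x y h => ih _ _ ((s (n+k+1)).2.1.1 x y h)
      have dmem : ∀ n k x, d n k x ∈ A n := by
        intro n k
        induction k with
        | zero => exact fun x => ⟨x, rfl⟩
        | succ k ih => exact fun x => ih _
      have dfix : ∀ n k z, z ∈ A n → d n k z = z := by
        intro n k z hz
        induction k with
        | zero => exact hfixA n z hz n le_rfl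
        | succ k ih =>
          rw [dS, hfixA n z hz (n+k+1) (by omega)]
          exact ih
      have dstab : ∀ n k j x, x ∈ A j → j ≤ n + k + 1 → ∀ l, d n (k + l) x = d n k x := by
        intro n k j x hx hj l
        induction l with
        | zero => rfl
        | succ l ih =>
          have hx' : (s (n+(k+l)+1)).1 x = x := hfixA j x hx (n+(k+l)+1) (by omega)
          calc d n (k+(l+1)) x = d n ((k+l)+1) x := rfl
            _ = d n (k+l) ((s (n+(k+l)+1)).1 x) := dS n (k+l) x
            _ = d n (k+l) x := by rw [hx']
            _ = d n k x := ih
      have eqd : ∀ n k k' j x, x ∈ A j → j ≤ n+k+1 → j ≤ n+k'+1 → d n k x = d n k' x := by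
        intro n k k' j x hx h1 h2
        have h3 := dstab n k j x hx h1 (max k k' - k)
        have h4 := dstab n k' j x hx h2 (max k k' - k')
        rw [show k + (max k k' - k) = max k k' by omega] at h3
        rw [show k' + (max k k' - k') = max k k' by omega] at h4
        rw [← h3, h4]
      have dcomp : ∀ n k k' x, d n k (d (n+k+1) k' x) = d n (k+1+k') x := by
        intro n k k'
        induction k' with
        | zero => intro x; rfl
        | succ k' ih =>
          intro x
          have h1 : d (n+k+1) (k'+1) x = d (n+k+1) k' ((s (n+k+1+k'+1)).1 x) := rfl
          have h2 : d n (k+1+(k'+1)) x = d n (k+1+k') ((s (n+(k+1+k')+1)).1 x) := rfl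
          rw [h1, ih, h2]
          have : n+k+1+k'+1 = n+(k+1+k')+1 := by omega
          rw [this]
      have hAx : ∀ x : X, ∃ n, x ∈ A n := by
        intro x
        obtain ⟨m, rfl⟩ := he x
        exact ⟨m, hse m⟩
      let ν : X → ℕ := fun x => (hAx x).choose
      have hν : ∀ x, x ∈ A (ν x) := fun x => (hAx x).choose_spec
      let r : ℕ → X → X := fun n x => d n (ν x) x
      have hr_eq : ∀ n x k, ν x ≤ n + k + 1 → r n x = d n k x := by
        intro n x k hk
        exact eqd n (ν x) k (ν x) x (hν x) (by omega) hk
      have hrmem : ∀ n x, r n x ∈ A n := fun n x => dmem n (ν x) x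
      have hrfix : ∀ n z, z ∈ A n → r n z = z := fun n z hz => dfix n (ν z) z hz
      refine ⟨r, ?_, ?_, ?_, ?_⟩
      · intro n
        constructor
        · intro x y hxy
          rw [hr_eq n x (max (ν x) (ν y)) (by omega),
              hr_eq n y (max (ν x) (ν y)) (by omega)]
          exact dedge n _ x y hxy
        · intro x
          exact hrfix n (r n x) (hrmem n x)
      · intro n
        refine ((s n).2.2).subset ?_
        rintro _ ⟨x, rfl⟩
        exact hrmem n x
      · intro n m
        funext x
        simp only [Function.comp_apply]
        rcases le_or_gt m n with h | h
        · rw [min_eq_right h]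
          exact hrfix n (r m x) (hmono m n h (hrmem m x))
        · rw [min_eq_left h.le]
          have hk : n + (m - n - 1) + 1 = m := by omega
          have hz : r m x ∈ A m := hrmem m x
          have e1 : r n (r m x) = d n (m - n - 1) (r m x) := by
            rcases le_total (ν (r m x)) m with hje | hje
            · exact eqd n (ν (r m x)) (m - n - 1) (ν (r m x)) _ (hν _) (by omega) (by omega)
            · exact eqd n (ν (r m x)) (m - n - 1) m _ hz (by omega) (by omega)
          have e2 : d n (m - n - 1) (r m x) = d n ((m - n - 1) + 1 + ν x) x := by
            have h := dcomp n (m - n - 1) (ν x) x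
            rw [hk] at h
            exact h
          have e3 : r n x = d n ((m - n - 1) + 1 + ν x) x :=
            hr_eq n x _ (by omega)
          rw [e1, e2, ← e3]
      · apply Set.eq_univ_of_forall
        intro x
        exact Set.mem_iUnion.2 ⟨ν x, x, hrfix (ν x) x (hν x)⟩
  · rintro ⟨r, hret, hfin, hcomp, hcov⟩
    intro F
    have hx : ∀ x : X, ∃ n, x ∈ Set.range (r n) := by
      intro x
      have : x ∈ ⋃ n, Set.range (r n) := hcov ▸ Set.mem_univ x
      simpa using this
    refine ⟨r (F.sup fun x => (hx x).choose), hret _, hfin _, ?_⟩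
    intro x hxF
    obtain ⟨y, hy⟩ := (hx x).choose_spec
    have hle : (hx x).choose ≤ F.sup fun x => (hx x).choose :=
      Finset.le_sup (f := fun x => (hx x).choose) hxF
    have h := congrFun (hcomp (F.sup fun x => (hx x).choose) (hx x).choose) y
    rw [min_eq_right hle, Function.comp_apply, hy] at h
    exact ⟨x, h⟩
end

section
/- Let X be a graph and let (f_n) be a sequence of graph homomorphisms f_n : X → X such that each image f_n(X) is finite and for every x ∈ X there is n₀ with f_n(x) = x for all n ≥ n₀ (i.e. f_n converges pointwise to the identity with X discrete). Then X is countable and finitely retractable. -/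
/-- Any map with finite range has an idempotent iterate. -/
lemma exists_idem_iterate {X : Type*} (h : X → X) (hfin : (Set.range h).Finite) :
    ∃ k, 1 ≤ k ∧ ∀ x, h^[k] (h^[k] x) = h^[k] x := by
  have : Finite (Set.range h) := hfin
  set φ : ℕ → (Set.range h → Set.range h) :=
    fun m s => ⟨h^[m] (h s.1), by
      rw [← Function.iterate_succ_apply, Function.iterate_succ_apply']
      exact Set.mem_range_self _⟩ with hφ
  obtain ⟨i, j, hne, heq⟩ := Finite.exists_ne_map_eq_of_infinite φ
  -- wlog i < j
  wlog hij : i < j generalizing i j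
  · exact this j i hne.symm heq.symm (by omega)
  -- global equality h^[i+2] = h^[j+2]
  have hglob : ∀ x, h^[i+2] x = h^[j+2] x := by
    intro x
    have := congrFun heq ⟨h x, Set.mem_range_self _⟩
    have h2 : h^[i] (h (h x)) = h^[j] (h (h x)) := congrArg Subtype.val this
    calc h^[i+2] x = h^[i] (h (h x)) := by
          rw [show i + 2 = i + 1 + 1 from rfl, Function.iterate_succ_apply,
            Function.iterate_succ_apply]
      _ = h^[j] (h (h x)) := h2
      _ = h^[j+2] x := by
          rw [show j + 2 = j + 1 + 1 from rfl, Function.iterate_succ_apply,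
            Function.iterate_succ_apply]
  set A := i + 2 with hA
  set q := j - i with hq
  have hq1 : 1 ≤ q := by omega
  have hstep : ∀ m, A ≤ m → ∀ x, h^[m + q] x = h^[m] x := by
    intro m hm x
    have hmq : m + q = (m - A) + (j + 2) := by omega
    have hmA : m = (m - A) + A := by omega
    rw [hmq, Function.iterate_add_apply, ← hglob, ← Function.iterate_add_apply, ← hmA]
  have hmul : ∀ t m, A ≤ m → ∀ x, h^[m + t * q] x = h^[m] x := by
    intro t
    induction t with
    | zero => simp
    | succ t ih =>
      intro m hm x
      have : m + (t + 1) * q = (m + t * q) + q := by ring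
      rw [this, hstep _ (by omega) x, ih m hm x]
  refine ⟨A * q, Nat.one_le_iff_ne_zero.mpr (Nat.mul_pos (hA ▸ (i+1).succ_pos) hq1).ne', fun x => ?_⟩
  have hk : A ≤ A * q := Nat.le_mul_of_pos_right A hq1
  rw [← Function.iterate_add_apply]
  have : A * q + A * q = A * q + A * q := rfl
  calc h^[A * q + A * q] x = h^[A * q] x := hmul A (A * q) hk x
    _ = h^[A * q] x := rfl

lemma iterate_hom {X : Type*} {E : X → X → Prop} {h : X → X}
    (hh : ∀ x y, E x y → E (h x) (h y)) :
    ∀ k x y, E x y → E (h^[k] x) (h^[k] y) := by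
  intro k
  induction k with
  | zero => simpa using fun x y hxy => hxy
  | succ k ih =>
    intro x y hxy
    simp only [Function.iterate_succ_apply]
    exact ih _ _ (hh _ _ hxy)

/-- Let X be a graph and (f_n) a sequence of graph homomorphisms
f_n : X → X with finite images such that for every x ∈ X there is n₀ with
f_n(x) = x for all n ≥ n₀. Then X is countable and finitely retractable. -/
theorem stmt_13 {X : Type*} (E : X → X → Prop)
    (hrefl : ∀ x, E x x) (hsymm : ∀ x y, E x y → E y x)
    (f : ℕ → X → X)
    (hhom : ∀ n, ∀ x y, E x y → E (f n x) (f n y))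
    (hfin : ∀ n, (Set.range (f n)).Finite)
    (hconv : ∀ x : X, ∃ n₀ : ℕ, ∀ n, n₀ ≤ n → f n x = x) :
    Countable X ∧ FinitelyRetractable E := by
  constructor
  · -- countability
    have huniv : (Set.univ : Set X) ⊆ ⋃ n, Set.range (f n) := by
      intro x _
      obtain ⟨n₀, hn⟩ := hconv x
      exact Set.mem_iUnion.mpr ⟨n₀, ⟨x, hn n₀ le_rfl⟩⟩
    have hcnt : (Set.univ : Set X).Countable :=
      (Set.countable_iUnion fun n => (hfin n).countable).mono huniv
    exact Set.countable_univ_iff.mp hcnt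
  · intro F
    choose g hg using hconv
    set n := F.sup g with hn
    have hfix : ∀ a ∈ F, f n a = a := fun a ha => hg a n (Finset.le_sup ha)
    obtain ⟨k, hk1, hidem⟩ := exists_idem_iterate (f n) (hfin n)
    refine ⟨(f n)^[k], ⟨iterate_hom (hhom n) k, hidem⟩, ?_, ?_⟩
    · refine (hfin n).subset ?_
      rintro _ ⟨x, rfl⟩
      obtain ⟨k', rfl⟩ : ∃ k', k = k' + 1 := ⟨k - 1, by omega⟩
      rw [Function.iterate_succ_apply']
      exact Set.mem_range_self _
    · intro a ha
      exact ⟨a, Function.iterate_fixed (hfix a ha) k⟩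
end

section
/- Every retract of a finitely retractable graph is finitely retractable: if X is a finitely retractable graph and s : X → X is a retraction, then the induced subgraph on the image s(X) is finitely retractable. -/
lemma exists_idem_iterate_s14 {Y : Type*} (f : Y → Y) (hf : (Set.range f).Finite) :
    ∃ n, 1 ≤ n ∧ ∀ y, f^[n] (f^[n] y) = f^[n] y := by
  haveI : Finite (Set.range f) := hf
  have key : ∃ i j : ℕ, i < j ∧ ∀ y : Y, f^[i+1] y = f^[j+1] y := by
    have memr : ∀ (n : ℕ) (y : Y), f^[n+1] y ∈ Set.range f := by
      intro n y
      rw [Function.iterate_succ_apply']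
      exact ⟨_, rfl⟩
    let g : ℕ → (Set.range f → Set.range f) :=
      fun n x => ⟨f^[n+1] x.1, memr n x.1⟩
    obtain ⟨a, b, hab, heq⟩ := Finite.exists_ne_map_eq_of_infinite g
    have main : ∀ y : Y, f^[a+1+1] y = f^[b+1+1] y := by
      intro y
      have h1 : g a ⟨f y, ⟨y, rfl⟩⟩ = g b ⟨f y, ⟨y, rfl⟩⟩ := by rw [heq]
      have h2 := congrArg Subtype.val h1
      simp only [g] at h2
      rw [← Function.iterate_succ_apply, ← Function.iterate_succ_apply] at h2
      exact h2
    rcases lt_or_gt_of_ne hab with h | h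
    · exact ⟨a+1, b+1, by omega, main⟩
    · exact ⟨b+1, a+1, by omega, fun y => (main y).symm⟩
  obtain ⟨i, j, hij, heq⟩ := key
  set d := j - i with hd
  have hd1 : 1 ≤ d := by omega
  have step : ∀ m, i + 1 ≤ m → ∀ y, f^[m + d] y = f^[m] y := by
    intro m hm y
    have h1 : m + d = (m - (i+1)) + (j + 1) := by omega
    have h2 : m = (m - (i+1)) + (i + 1) := by omega
    rw [h1, Function.iterate_add_apply, ← heq y, ← Function.iterate_add_apply, ← h2]
  have multi : ∀ k m, i + 1 ≤ m → ∀ y, f^[m + k * d] y = f^[m] y := by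
    intro k
    induction k with
    | zero => simp
    | succ k ih =>
      intro m hm y
      have h : m + (k+1) * d = (m + d) + k * d := by ring
      rw [h, ih (m + d) (by omega), step m hm]
  refine ⟨(i + 1) * d, Nat.one_le_iff_ne_zero.mpr (by positivity), fun y => ?_⟩
  have h : f^[(i+1)*d] (f^[(i+1)*d] y) = f^[(i+1)*d + (i+1)*d] y := by
    rw [Function.iterate_add_apply]
  rw [h, multi (i+1) ((i+1)*d) (Nat.le_mul_of_pos_right _ hd1) y]

/-- Every retract of a finitely retractable graph is finitely
retractable: if X is a finitely retractable graph and s : X → X is a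
retraction, then the induced subgraph on the image s(X) is finitely
retractable. -/
theorem stmt_14 {X : Type*} (E : X → X → Prop)
    (hrefl : ∀ x, E x x) (hsymm : ∀ x y, E x y → E y x)
    (hFR : FinitelyRetractable E)
    (s : X → X) (hs : IsGraphRetraction E s) :
    FinitelyRetractable (fun a b : Set.range s => E a.1 b.1) := by
  intro F
  classical
  obtain ⟨r, hr, hrfin, hrsub⟩ := hFR (F.image Subtype.val)
  -- the self-map s ∘ r on range s
  let f : Set.range s → Set.range s := fun a => ⟨s (r a.1), ⟨r a.1, rfl⟩⟩
  have hhom : ∀ a b : Set.range s, E a.1 b.1 → E (f a).1 (f b).1 :=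
    fun a b h => hs.1 _ _ (hr.1 _ _ h)
  have hfix : ∀ a ∈ F, f a = a := by
    intro a ha
    have h1 : a.1 ∈ Set.range r := hrsub (Finset.mem_coe.mpr (Finset.mem_image_of_mem _ ha))
    obtain ⟨z, hz⟩ := h1
    have hra : r a.1 = a.1 := by rw [← hz, hr.2]
    obtain ⟨w, hw⟩ := a.2
    have hsa : s a.1 = a.1 := by rw [← hw, hs.2]
    exact Subtype.ext (by simp only [f, hra, hsa])
  have hffin : (Set.range f).Finite := by
    apply Set.Finite.subset (hrfin.image (fun z => (⟨s z, ⟨z, rfl⟩⟩ : Set.range s)))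
    rintro _ ⟨a, rfl⟩
    exact ⟨r a.1, ⟨a.1, rfl⟩, rfl⟩
  obtain ⟨n, hn1, hidem⟩ := exists_idem_iterate_s14 f hffin
  refine ⟨f^[n], ⟨?_, hidem⟩, ?_, ?_⟩
  · intro a b h
    clear hn1 hidem
    induction n with
    | zero => simpa using h
    | succ k ih =>
      rw [Function.iterate_succ_apply', Function.iterate_succ_apply']
      exact hhom _ _ ih
  · apply Set.Finite.subset hffin
    rintro _ ⟨a, rfl⟩
    obtain ⟨k, hk⟩ : ∃ k, n = k + 1 := ⟨n - 1, by omega⟩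
    rw [hk, Function.iterate_succ_apply']
    exact ⟨_, rfl⟩
  · intro a ha
    exact ⟨a, Function.iterate_fixed (hfix a (Finset.mem_coe.mp ha)) n⟩
end

section
/- Every finite retract of a point-by-point retractable graph is point-by-point retractable: if B is a point-by-point retractable graph, r : B → B is a retraction, and the image A = r(B) is finite, then the induced subgraph A is point-by-point retractable. -/
/-- A graph `(X, E)` is point-by-point retractable (PPR) if X = ⋃_n X_n for a
chain of induced subgraphs with |X_0| = 1, X_n ⊆ X_{n+1}, |X_{n+1} \ X_n| ≤ 1,
such that for each n there is a retraction of the induced subgraph X_{n+1}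
onto X_n (a graph homomorphism X_{n+1} → X_n that is the identity on X_n). -/
def PointByPointRetractable {X : Type*} (E : X → X → Prop) : Prop :=
  ∃ A : ℕ → Set X,
    (∃ x : X, A 0 = {x}) ∧
    (∀ n, A n ⊆ A (n + 1)) ∧
    (∀ n, (A (n + 1) \ A n).Subsingleton) ∧
    (⋃ n, A n) = Set.univ ∧
    ∀ n, ∃ r : X → X,
      (∀ x ∈ A (n + 1), r x ∈ A n) ∧
      (∀ x ∈ A n, r x = x) ∧
      (∀ x ∈ A (n + 1), ∀ y ∈ A (n + 1), E x y → E (r x) (r y))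

/-!
Let `A = range r` and choose `N` with `A ⊆ X_N`. Following the retractions
`X_N → X_{N-1} → ⋯ → X_0` and then applying `r` gives maps `f_0 = id, f_1, …, f_N` from `A`
to `A` with `f_N` constant. Since each `X_{n+1} \ X_n` has at most one point, consecutive maps
are related by: if `u ~ v` and `f_j u ≠ f_j v` then `f_j u ~ f_{j+1} v`.

On a finite graph carrying such a contraction, the first map `f_{j+1}` that moves some vertex `u`
sends it to a vertex dominating `u` (every neighbour `z ≠ u` of `u` satisfies
`z = f_j z ~ f_{j+1} u`). Folding `u` onto that vertex is a retraction, the contraction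
descends to the smaller graph along the fold, and by induction the graph is dismantlable;
adding the vertices back in the reverse order of removal is a PPR chain.
-/

open Set

structure IsRetractionOn {X : Type*} (E : X → X → Prop) (ρ : X → X) (T T' : Set X) : Prop where
  mapsTo : MapsTo ρ T T'
  apply_eq : ∀ x ∈ T', ρ x = x
  map_rel : ∀ x ∈ T, ∀ y ∈ T, E x y → E (ρ x) (ρ y)

structure IsPPRChain {X : Type*} (E : X → X → Prop) (S : Set X) (C : ℕ → Set X) : Prop where
  exists_eq_singleton : ∃ x, C 0 = {x}
  mono : ∀ n, C n ⊆ C (n + 1)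
  subsingleton_diff : ∀ n, (C (n + 1) \ C n).Subsingleton
  iUnion_eq : ⋃ n, C n = S
  exists_retraction : ∀ n, ∃ ρ, IsRetractionOn E ρ (C (n + 1)) (C n)

def Dominates {X : Type*} (E : X → X → Prop) (S : Set X) (w u : X) : Prop :=
  ∀ z ∈ S, z ≠ u → E z u → E z w

/-- A discrete homotopy `f 0 = id, f 1, …, f K = const` on `S`, in the form produced by
descending a chain of one-point retractions. -/
structure IsContraction {X : Type*} (E : X → X → Prop) (S : Set X) (K : ℕ) (f : ℕ → X → X) :
    Prop where
  mapsTo : ∀ j, MapsTo (f j) S S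
  apply_zero : ∀ x ∈ S, f 0 x = x
  exists_const : ∃ c, ∀ x ∈ S, f K x = c
  rel_succ : ∀ j < K, ∀ u ∈ S, ∀ v ∈ S, E u v → f j u ≠ f j v → E (f j u) (f (j + 1) v)

section

variable {X : Type*} {E : X → X → Prop}

theorem Set.Finite.exists_subset_of_subset_iUnion {S : Set X} (hS : S.Finite) {A : ℕ → Set X}
    (hA : Monotone A) (h : S ⊆ ⋃ n, A n) : ∃ n, S ⊆ A n := by
  simpa using hA.directed_le.exists_mem_subset_of_finset_subset_biUnion (s := hS.toFinset)
    (by simpa using h)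

namespace IsRetractionOn

theorem id (T : Set X) : IsRetractionOn E id T T :=
  ⟨mapsTo_id T, fun _ _ => rfl, fun _ _ _ _ h => h⟩

theorem rel_apply_of_ne {ρ : X → X} {T T' : Set X} (hρ : IsRetractionOn E ρ T T')
    (hdiff : (T \ T').Subsingleton) {a b : X} (ha : a ∈ T) (hb : b ∈ T) (hab : E a b)
    (hne : a ≠ b) : E a (ρ b) := by
  by_cases hb' : b ∈ T'
  · rwa [hρ.apply_eq b hb']
  · have ha' : a ∈ T' := by_contra fun ha' => hne (hdiff ⟨ha, ha'⟩ ⟨hb, hb'⟩)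
    simpa [hρ.apply_eq a ha'] using hρ.map_rel a ha b hb hab

end IsRetractionOn

open Classical in
theorem isRetractionOn_update_of_dominates (hrefl : ∀ x, E x x)
    (hsymm : ∀ x y, E x y → E y x) {S : Set X} {u w : X} (hw : w ∈ S) (hwu : w ≠ u)
    (hdom : Dominates E S w u) : IsRetractionOn E (Function.update id u w) S (S \ {u}) where
  mapsTo x hx := by
    by_cases h : x = u
    · simp [h, hw, hwu]
    · simp [h, hx]
  apply_eq x hx := Function.update_of_ne (by simpa using hx.2) w _root_.id
  map_rel x hx y hy hxy := by
    by_cases hx' : x = u <;> by_cases hy' : y = u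
    · simpa [hx', hy'] using hrefl w
    · subst hx'; simpa [hy'] using hsymm _ _ (hdom y hy hy' (hsymm _ _ hxy))
    · subst hy'; simpa [hx'] using hdom x hx hx' hxy
    · simpa [hx', hy'] using hxy

namespace IsPPRChain

variable {S : Set X} {C : ℕ → Set X}

theorem singleton (x : X) : IsPPRChain E {x} fun _ => {x} where
  exists_eq_singleton := ⟨x, rfl⟩
  mono _ := subset_rfl
  subsingleton_diff _ := by simp
  iUnion_eq := iUnion_const _
  exists_retraction _ := ⟨_, IsRetractionOn.id _⟩

theorem subset (hC : IsPPRChain E S C) (n : ℕ) : C n ⊆ S :=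
  hC.iUnion_eq ▸ subset_iUnion C n

theorem exists_eq_of_finite (hC : IsPPRChain E S C) (hS : S.Finite) : ∃ M, C M = S := by
  obtain ⟨M, hM⟩ := hS.exists_subset_of_subset_iUnion (monotone_nat_of_le_succ hC.mono)
    hC.iUnion_eq.ge
  exact ⟨M, (hC.subset M).antisymm hM⟩

theorem extend (hC : IsPPRChain E S C) (hS : S.Finite) {T : Set X} (hST : S ⊆ T)
    (hdiff : (T \ S).Subsingleton) {ρ : X → X} (hρ : IsRetractionOn E ρ T S) :
    ∃ C', IsPPRChain E T C' := by
  obtain ⟨M, hM⟩ := hC.exists_eq_of_finite hS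
  refine ⟨fun n => if n ≤ M then C n else T, ?_, fun n => ?_, fun n => ?_, ?_, fun n => ?_⟩
  · simpa using hC.exists_eq_singleton
  · rcases lt_trichotomy n M with h | rfl | h
    · simpa [h.le, Nat.succ_le_of_lt h] using hC.mono n
    · simpa [hM] using hST
    · simp [h.not_ge, (Nat.lt_succ_of_lt h).not_ge]
  · rcases lt_trichotomy n M with h | rfl | h
    · simpa [h.le, Nat.succ_le_of_lt h] using hC.subsingleton_diff n
    · simpa [hM] using hdiff
    · simp [h.not_ge, (Nat.lt_succ_of_lt h).not_ge]
  · refine (iUnion_subset fun n => ?_).antisymm (subset_iUnion_of_subset (M + 1) (by simp))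
    split_ifs
    exacts [(hC.subset n).trans hST, subset_rfl]
  · rcases lt_trichotomy n M with h | rfl | h
    · simpa [h.le, Nat.succ_le_of_lt h] using hC.exists_retraction n
    · simpa [hM] using ⟨ρ, hρ⟩
    · simpa [h.not_ge, (Nat.lt_succ_of_lt h).not_ge] using ⟨_, IsRetractionOn.id _⟩

theorem pointByPointRetractable (hC : IsPPRChain E S C) :
    PointByPointRetractable fun a b : S => E a b := by
  refine ⟨fun n => Subtype.val ⁻¹' C n, ?_, fun n => preimage_mono (hC.mono n),
    fun n => (hC.subsingleton_diff n).preimage Subtype.val_injective, ?_, fun n => ?_⟩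
  · obtain ⟨x, hx⟩ := hC.exists_eq_singleton
    have hxS : x ∈ S := hC.subset 0 (hx ▸ rfl)
    exact ⟨⟨x, hxS⟩, by ext; simp [hx, Subtype.ext_iff]⟩
  · simp [← preimage_iUnion, hC.iUnion_eq]
  · classical
    obtain ⟨ρ, hρ⟩ := hC.exists_retraction n
    -- `ρ` need not map `S` into `S` outside `C (n + 1)`, so it is replaced by the identity there.
    have hmaps : MapsTo ((C (n + 1)).piecewise ρ _root_.id) S S := fun x hx => by
      by_cases h : x ∈ C (n + 1)
      · simpa [h] using hC.subset n (hρ.mapsTo h)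
      · simpa [h] using hx
    refine ⟨hmaps.restrict _ S S, fun a (ha : (a : X) ∈ C (n + 1)) => ?_,
      fun a (ha : (a : X) ∈ C n) => ?_,
      fun a (ha : (a : X) ∈ C (n + 1)) b (hb : (b : X) ∈ C (n + 1)) (hab : E a b) => ?_⟩
    · rw [mem_preimage, hmaps.val_restrict_apply, piecewise_eq_of_mem _ _ _ ha]
      exact hρ.mapsTo ha
    · ext
      rw [hmaps.val_restrict_apply, piecewise_eq_of_mem _ _ _ (hC.mono n ha)]
      exact hρ.apply_eq a ha
    · dsimp only
      rw [hmaps.val_restrict_apply, hmaps.val_restrict_apply, piecewise_eq_of_mem _ _ _ ha,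
        piecewise_eq_of_mem _ _ _ hb]
      exact hρ.map_rel a ha b hb hab

end IsPPRChain

namespace IsContraction

variable {S : Set X} {K : ℕ} {f : ℕ → X → X}

theorem exists_dominates (hf : IsContraction E S K f) (hS : S.Nontrivial) :
    ∃ u ∈ S, ∃ w ∈ S, w ≠ u ∧ Dominates E S w u := by
  by_contra! hnd
  have hid : ∀ i ≤ K, ∀ x ∈ S, f i x = x := by
    intro i hi
    induction i with
    | zero => exact hf.apply_zero
    | succ j ih =>
      have hj := ih (by omega)
      intro v hv
      by_contra hfv
      refine hnd v hv _ (hf.mapsTo (j + 1) hv) hfv fun z hz hzv hzE => ?_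
      simpa [hj z hz] using hf.rel_succ j (by omega) z hz v hv hzE (by simpa [hj z hz, hj v hv])
  obtain ⟨a, ha, b, hb, hab⟩ := hS
  obtain ⟨c, hc⟩ := hf.exists_const
  exact hab (by rw [← hid K le_rfl a ha, ← hid K le_rfl b hb, hc a ha, hc b hb])

theorem comp_retraction (hf : IsContraction E S K f) {S' : Set X} {σ : X → X}
    (hσ : IsRetractionOn E σ S S') (hS' : S' ⊆ S) : IsContraction E S' K fun j => σ ∘ f j where
  mapsTo j := hσ.mapsTo.comp ((hf.mapsTo j).mono_left hS')
  apply_zero x hx := by simp [hf.apply_zero x (hS' hx), hσ.apply_eq x hx]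
  exists_const :=
    let ⟨c, hc⟩ := hf.exists_const
    ⟨σ c, fun x hx => by simp [hc x (hS' hx)]⟩
  rel_succ j hj u hu v hv huv hne :=
    hσ.map_rel _ (hf.mapsTo j (hS' hu)) _ (hf.mapsTo (j + 1) (hS' hv))
      (hf.rel_succ j hj u (hS' hu) v (hS' hv) huv fun h => hne (by simp [h]))

end IsContraction

theorem IsContraction.exists_isPPRChain (hrefl : ∀ x, E x x) (hsymm : ∀ x y, E x y → E y x)
    {S : Set X} {K : ℕ} {f : ℕ → X → X} (hf : IsContraction E S K f) (hS : S.Finite)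
    (hne : S.Nonempty) : ∃ C, IsPPRChain E S C := by
  rcases S.subsingleton_or_nontrivial with hsub | hnt
  · obtain ⟨x, hx⟩ := hne
    exact ⟨_, hsub.eq_singleton_of_mem hx ▸ IsPPRChain.singleton x⟩
  obtain ⟨u, hu, w, hw, hwu, hdom⟩ := hf.exists_dominates hnt
  have hσ := isRetractionOn_update_of_dominates hrefl hsymm hw hwu hdom
  obtain ⟨C, hC⟩ := (hf.comp_retraction hσ sdiff_subset).exists_isPPRChain hrefl hsymm
    hS.sdiff ⟨w, hw, hwu⟩
  refine hC.extend hS.sdiff sdiff_subset ((subsingleton_singleton (a := u)).anti fun x hx => ?_) hσ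
  by_contra hxu
  exact hx.2 ⟨hx.1, hxu⟩
termination_by S.ncard
decreasing_by exact ncard_sdiff_singleton_lt_of_mem hu hS

def descendingComp (s : ℕ → X → X) (N : ℕ) : ℕ → X → X
  | 0 => id
  | j + 1 => s (N - (j + 1)) ∘ descendingComp s N j

section DescendingComp

variable {A : ℕ → Set X} {s : ℕ → X → X} (hA : Monotone A)
  (hs : ∀ n, IsRetractionOn E (s n) (A (n + 1)) (A n)) (N : ℕ)
include hA hs

theorem mapsTo_descendingComp : ∀ j, MapsTo (descendingComp s N j) (A N) (A (N - j))
  | 0 => mapsTo_id _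
  | j + 1 => (hs _).mapsTo.comp ((mapsTo_descendingComp j).mono_right (hA (by omega)))

theorem map_rel_descendingComp :
    ∀ j, ∀ x ∈ A N, ∀ y ∈ A N, E x y → E (descendingComp s N j x) (descendingComp s N j y)
  | 0 => fun _ _ _ _ h => h
  | j + 1 => fun x hx y hy h =>
    have hmem := fun z (hz : z ∈ A N) => hA (by omega) (mapsTo_descendingComp hA hs N j hz)
    (hs _).map_rel _ (hmem x hx) _ (hmem y hy) (map_rel_descendingComp j x hx y hy h)

end DescendingComp

theorem PointByPointRetractable.exists_isContraction_range (hPPR : PointByPointRetractable E)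
    {r : X → X} (hhom : ∀ x y, E x y → E (r x) (r y)) (hretr : ∀ x, r (r x) = r x)
    (hfin : (range r).Finite) : ∃ K f, IsContraction E (range r) K f := by
  obtain ⟨A, ⟨x₀, hA0⟩, hmono, hdiff, hunion, hs⟩ := hPPR
  choose s hs₁ hs₂ hs₃ using hs
  have hs n : IsRetractionOn E (s n) (A (n + 1)) (A n) := ⟨hs₁ n, hs₂ n, hs₃ n⟩
  have hA : Monotone A := monotone_nat_of_le_succ hmono
  obtain ⟨N, hN⟩ := hfin.exists_subset_of_subset_iUnion hA (hunion ▸ subset_univ _)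
  refine ⟨N, fun j => r ∘ descendingComp s N j,
    ⟨fun j _ _ => mem_range_self _, ?_, ⟨r x₀, ?_⟩, ?_⟩⟩
  · rintro _ ⟨y, rfl⟩
    exact hretr y
  · intro x hx
    have h0 : descendingComp s N N x ∈ A 0 := by
      simpa using mapsTo_descendingComp hA hs N N (hN hx)
    rw [hA0] at h0
    exact congrArg r h0
  · intro j hj u hu v hv huv hne
    set n := N - (j + 1)
    have hmem : ∀ x ∈ range r, descendingComp s N j x ∈ A (n + 1) := fun x hx =>
      (show N - j = n + 1 by omega) ▸ mapsTo_descendingComp hA hs N j (hN hx)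
    exact hhom _ _ <| (hs n).rel_apply_of_ne (hdiff n) (hmem u hu) (hmem v hv)
      (map_rel_descendingComp hA hs N j u (hN hu) v (hN hv) huv) fun h => hne (by simp [h])

end

/-- Every finite retract of a point-by-point retractable graph
is point-by-point retractable: if B is a PPR graph, r : B → B is a retraction,
and the image A = r(B) is finite, then the induced subgraph on A is PPR. -/
theorem stmt_15 {B : Type*} (E : B → B → Prop)
    (hrefl : ∀ x, E x x) (hsymm : ∀ x y, E x y → E y x)
    (hPPR : PointByPointRetractable E)
    (r : B → B)
    (hhom : ∀ x y, E x y → E (r x) (r y))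
    (hretr : ∀ x, r (r x) = r x)
    (hfin : (Set.range r).Finite) :
    PointByPointRetractable (fun a b : Set.range r => E a.1 b.1) := by
  obtain ⟨K, f, hf⟩ := hPPR.exists_isContraction_range hhom hretr hfin
  obtain ⟨-, ⟨x₀, -⟩, -⟩ := hPPR
  obtain ⟨C, hC⟩ := hf.exists_isPPRChain hrefl hsymm hfin ⟨r x₀, mem_range_self x₀⟩
  exact hC.pointByPointRetractable
end

section
/- Let k > 2 be a natural number and let C_k be the k-element cycle graph with loops (vertex set ℤ/kℤ, with i adjacent to j iff i = j or i − j = ±1 mod k). Then C_k is point-by-point retractable if and only if k < 5, and C_k is sociable if and only if k = 3. -/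
/-- A graph `(X, E)` is sociable if it is point-by-point retractable with the
retractions chosen so that each newly added vertex w is adjacent to r(w). -/
def Sociable {X : Type*} (E : X → X → Prop) : Prop :=
  ∃ A : ℕ → Set X,
    (∃ x : X, A 0 = {x}) ∧
    (∀ n, A n ⊆ A (n + 1)) ∧
    (∀ n, (A (n + 1) \ A n).Subsingleton) ∧
    (⋃ n, A n) = Set.univ ∧
    ∀ n, ∃ r : X → X,
      (∀ x ∈ A (n + 1), r x ∈ A n) ∧
      (∀ x ∈ A n, r x = x) ∧
      (∀ x ∈ A (n + 1), ∀ y ∈ A (n + 1), E x y → E (r x) (r y)) ∧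
      (∀ w ∈ A (n + 1) \ A n, E w (r w))

/-- The k-element cycle graph with loops: vertex set ℤ/kℤ, with i adjacent to
j iff i = j or i − j = ±1 (mod k). -/
def CycleRel (k : ℕ) (i j : ZMod k) : Prop :=
  i = j ∨ i - j = 1 ∨ j - i = 1

instance (k : ℕ) (i j : ZMod k) : Decidable (CycleRel k i j) := by
  unfold CycleRel; infer_instance

/-- the chain of subsets -/
def chainA (k : ℕ) (n : ℕ) : Set (ZMod k) := {i | i.val ≤ n}

section chain
variable (k : ℕ) [NeZero k]

lemma chain_zero : chainA k 0 = {0} := by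
  ext i
  simp [chainA, Nat.le_zero, ZMod.val_eq_zero]

lemma chain_mono (n : ℕ) : chainA k n ⊆ chainA k (n+1) :=
  fun i hi => le_trans hi (Nat.le_succ n)

lemma chain_sub (n : ℕ) : (chainA k (n+1) \ chainA k n).Subsingleton := by
  rintro a ⟨ha1, ha2⟩ b ⟨hb1, hb2⟩
  simp only [chainA, Set.mem_setOf_eq] at ha1 ha2 hb1 hb2
  exact ZMod.val_injective k (by omega)

lemma chain_union : (⋃ n, chainA k n) = Set.univ := by
  refine Set.eq_univ_of_forall fun i => Set.mem_iUnion.mpr ⟨i.val, ?_⟩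
  exact le_refl i.val

end chain

lemma key_ne (k c : ℕ) (h0 : 0 < c) (hc : c < k) : ((c : ℕ) : ZMod k) ≠ 0 := by
  haveI : NeZero k := ⟨by omega⟩
  rw [Ne, ZMod.natCast_eq_zero_iff]
  exact fun h => absurd (Nat.le_of_dvd h0 h) (by omega)

/-- the critical step: last set before the chain covers everything -/
lemma critical (k : ℕ) (hk : 2 < k) {A : ℕ → Set (ZMod k)}
    (hA0 : ∃ x, A 0 = {x}) (hmono : ∀ n, A n ⊆ A (n+1))
    (hsub : ∀ n, (A (n+1) \ A n).Subsingleton)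
    (hunion : (⋃ n, A n) = Set.univ) :
    ∃ m w, w ∉ A m ∧ A (m+1) = Set.univ ∧ ∀ v, v ≠ w → v ∈ A m := by
  classical
  haveI : NeZero k := ⟨by omega⟩
  have hMono : Monotone A := monotone_nat_of_le_succ hmono
  have hex : ∃ N, A N = Set.univ := by
    have h : ∀ i : ZMod k, ∃ n, i ∈ A n := fun i =>
      Set.mem_iUnion.mp (hunion ▸ Set.mem_univ i)
    choose f hf using h
    exact ⟨Finset.univ.sup f, Set.eq_univ_of_forall fun i =>
      hMono (Finset.le_sup (Finset.mem_univ i)) (hf i)⟩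
  have h1ne : (1 : ZMod k) ≠ 0 := by
    have := key_ne k 1 one_pos (by omega); simpa using this
  have hne0 : Nat.find hex ≠ 0 := by
    intro h0
    obtain ⟨x, hx⟩ := hA0
    have hA0u : A 0 = Set.univ := by rw [← h0]; exact Nat.find_spec hex
    have h01 : (0 : ZMod k) ∈ ({x} : Set (ZMod k)) := hx ▸ hA0u ▸ Set.mem_univ _
    have h11 : (1 : ZMod k) ∈ ({x} : Set (ZMod k)) := hx ▸ hA0u ▸ Set.mem_univ _
    simp only [Set.mem_singleton_iff] at h01 h11
    exact h1ne (h11.trans h01.symm)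
  obtain ⟨m, hm⟩ := Nat.exists_eq_succ_of_ne_zero hne0
  have hAm1 : A (m+1) = Set.univ := by
    have := Nat.find_spec hex
    rwa [hm] at this
  have hAm : A m ≠ Set.univ := Nat.find_min hex (by omega)
  obtain ⟨w, hw⟩ : ∃ w, w ∉ A m := by
    by_contra h; push_neg at h
    exact hAm (Set.eq_univ_of_forall h)
  refine ⟨m, w, hw, hAm1, fun v hv => ?_⟩
  by_contra h
  exact hv (hsub m ⟨hAm1 ▸ Set.mem_univ v, h⟩ ⟨hAm1 ▸ Set.mem_univ w, hw⟩)

lemma not_ppr (k : ℕ) (hk : 5 ≤ k) : ¬ PointByPointRetractable (CycleRel k) := by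
  rintro ⟨A, hA0, hmono, hsub, hunion, hret⟩
  obtain ⟨m, w, hw, hAm1, hall⟩ := critical k (by omega) hA0 hmono hsub hunion
  obtain ⟨r, hrA, hrfix, hrhom⟩ := hret m
  haveI : NeZero k := ⟨by omega⟩
  have h2 : (2 : ZMod k) ≠ 0 := by have := key_ne k 2 (by omega) (by omega); push_cast at this; exact this
  have h3 : (3 : ZMod k) ≠ 0 := by have := key_ne k 3 (by omega) (by omega); push_cast at this; exact this
  have h4 : (4 : ZMod k) ≠ 0 := by have := key_ne k 4 (by omega) (by omega); push_cast at this; exact this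
  have huniv : ∀ v : ZMod k, v ∈ A (m+1) := fun v => hAm1 ▸ Set.mem_univ v
  have h1 : (1 : ZMod k) ≠ 0 := by have := key_ne k 1 (by omega) (by omega); push_cast at this; exact this
  have hwp : w + 1 ≠ w := fun h => h1 (by linear_combination h)
  have hwm : w - 1 ≠ w := fun h => h1 (by linear_combination -h)
  have hEp : CycleRel k w (w+1) := Or.inr (Or.inr (by ring))
  have hEm : CycleRel k (w-1) w := Or.inr (Or.inr (by ring))
  have hfp : r (w+1) = w + 1 := hrfix _ (hall _ hwp)
  have hfm : r (w-1) = w - 1 := hrfix _ (hall _ hwm)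
  have hg1 : CycleRel k (r w) (w+1) := by
    have := hrhom w (huniv w) (w+1) (huniv _) hEp
    rwa [hfp] at this
  have hg2 : CycleRel k (w-1) (r w) := by
    have := hrhom (w-1) (huniv _) w (huniv w) hEm
    rwa [hfm] at this
  have hrw : r w ≠ w := fun h => hw (h ▸ hrA w (huniv w))
  unfold CycleRel at hg1 hg2
  rcases hg1 with e1 | e1 | e1
  · rcases hg2 with e2 | e2 | e2
    · exact h2 (by linear_combination -e1 - e2)
    · exact h3 (by linear_combination -e1 - e2)
    · exact hrw (by linear_combination e2)
  · rcases hg2 with e2 | e2 | e2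
    · exact h3 (by linear_combination -e1 - e2)
    · exact h4 (by linear_combination -e1 - e2)
    · exact hrw (by linear_combination e2)
  · exact hrw (by linear_combination -e1)

lemma soc4_aux : ∀ w v : ZMod 4,
    CycleRel 4 v (w+1) → CycleRel 4 (w-1) v → CycleRel 4 w v → v = w := by decide

lemma not_soc4 : ¬ Sociable (CycleRel 4) := by
  rintro ⟨A, hA0, hmono, hsub, hunion, hret⟩
  obtain ⟨m, w, hw, hAm1, hall⟩ := critical 4 (by norm_num) hA0 hmono hsub hunion
  obtain ⟨r, hrA, hrfix, hrhom, hsoc⟩ := hret m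
  have huniv : ∀ v : ZMod 4, v ∈ A (m+1) := fun v => hAm1 ▸ Set.mem_univ v
  have h1 : (1 : ZMod 4) ≠ 0 := by decide
  have hwp : w + 1 ≠ w := fun h => h1 (by linear_combination h)
  have hwm : w - 1 ≠ w := fun h => h1 (by linear_combination -h)
  have hfp : r (w+1) = w + 1 := hrfix _ (hall _ hwp)
  have hfm : r (w-1) = w - 1 := hrfix _ (hall _ hwm)
  have hg1 : CycleRel 4 (r w) (w+1) := by
    have := hrhom w (huniv w) (w+1) (huniv _) (Or.inr (Or.inr (by ring)))
    rwa [hfp] at this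
  have hg2 : CycleRel 4 (w-1) (r w) := by
    have := hrhom (w-1) (huniv _) w (huniv w) (Or.inr (Or.inr (by ring)))
    rwa [hfm] at this
  have hg3 : CycleRel 4 w (r w) := hsoc w ⟨huniv w, hw⟩
  have : r w = w := soc4_aux w (r w) hg1 hg2 hg3
  exact hw (this ▸ hrA w (huniv w))

lemma cr3_total : ∀ i j : ZMod 3, CycleRel 3 i j := by decide

lemma soc3 : Sociable (CycleRel 3) := by
  refine ⟨chainA 3, ⟨0, chain_zero 3⟩, chain_mono 3, chain_sub 3, chain_union 3, fun n => ?_⟩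
  refine ⟨fun x => if x.val ≤ n then x else 0, fun x hx => ?_, fun x hx => ?_,
    fun x _ y _ _ => cr3_total _ _, fun x _ => cr3_total _ _⟩
  · simp only [chainA, Set.mem_setOf_eq] at hx ⊢
    split
    · assumption
    · simp [ZMod.val_zero]
  · simp only [chainA, Set.mem_setOf_eq] at hx
    simp [hx]

lemma ppr4 : PointByPointRetractable (CycleRel 4) := by
  refine ⟨chainA 4, ⟨0, chain_zero 4⟩, chain_mono 4, chain_sub 4, chain_union 4, fun n => ?_⟩
  match n with
  | 0 =>
    refine ⟨fun x => if x.val ≤ 0 then x else 0, ?_, ?_, ?_⟩ <;>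
      simp only [chainA, Set.mem_setOf_eq] <;> decide
  | 1 =>
    refine ⟨fun x => if x.val ≤ 1 then x else 1, ?_, ?_, ?_⟩ <;>
      simp only [chainA, Set.mem_setOf_eq] <;> decide
  | 2 =>
    refine ⟨fun x => if x.val ≤ 2 then x else 1, ?_, ?_, ?_⟩ <;>
      simp only [chainA, Set.mem_setOf_eq] <;> decide
  | (m+3) =>
    refine ⟨id, fun x hx => ?_, fun x _ => rfl, fun x _ y _ h => h⟩
    have := ZMod.val_lt x
    simp only [chainA, Set.mem_setOf_eq, id] at hx ⊢
    omega

lemma soc_to_ppr {X : Type*} {E : X → X → Prop} (h : Sociable E) :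
    PointByPointRetractable E := by
  obtain ⟨A, h1, h2, h3, h4, h5⟩ := h
  exact ⟨A, h1, h2, h3, h4, fun n => by
    obtain ⟨r, a, b, c, _⟩ := h5 n
    exact ⟨r, a, b, c⟩⟩

/-- Let k > 2. Then the cycle C_k is point-by-point retractable
iff k < 5, and sociable iff k = 3. -/
theorem stmt_16 (k : ℕ) (hk : 2 < k) :
    (PointByPointRetractable (CycleRel k) ↔ k < 5) ∧
      (Sociable (CycleRel k) ↔ k = 3) := by
  constructor
  · constructor
    · intro h
      by_contra h5
      push_neg at h5
      exact not_ppr k h5 h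
    · intro h5
      interval_cases k
      · exact soc_to_ppr soc3
      · exact ppr4
  · constructor
    · intro hs
      by_contra h3
      rcases (by omega : k = 4 ∨ 5 ≤ k) with rfl | h5
      · exact not_soc4 hs
      · exact not_ppr k h5 (soc_to_ppr hs)
    · rintro rfl
      exact soc3
end

section
/- Let G be a nonempty countable graph such that for every finite set A ⊆ G there exists a vertex of G adjacent to all elements of A. Then G is sociable. -/
/-- The recursive construction: state is (current finite vertex set, designated
dominating vertex). At even steps we add a vertex dominating the current set
together with the next enumerated vertex; at odd steps we add the enumerated
vertex itself. -/
noncomputable def socSeq {G : Type*} [DecidableEq G] (E : G → G → Prop)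
    (hsent : ∀ A : Finset G, ∃ v : G, ∀ a ∈ A, E v a) (f : ℕ → G) :
    ℕ → Finset G × G
  | 0 => ({(hsent ∅).choose}, (hsent ∅).choose)
  | (n + 1) =>
    let p := socSeq E hsent f n
    if n % 2 = 0 then
      let v := (hsent (insert (f (n / 2)) p.1)).choose
      (insert v p.1, v)
    else
      (insert (f (n / 2)) p.1, p.2)

lemma socSeq_inv {G : Type*} [DecidableEq G] (E : G → G → Prop)
    (hrefl : ∀ x, E x x)
    (hsent : ∀ A : Finset G, ∃ v : G, ∀ a ∈ A, E v a) (f : ℕ → G) :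
    ∀ n, (socSeq E hsent f n).2 ∈ (socSeq E hsent f n).1 ∧
      (∀ y ∈ (socSeq E hsent f n).1, E (socSeq E hsent f n).2 y) ∧
      (n % 2 = 1 → E (socSeq E hsent f n).2 (f (n / 2))) := by
  intro n
  induction n with
  | zero =>
    refine ⟨by simp [socSeq], ?_, by simp⟩
    intro y hy
    simp only [socSeq, Finset.mem_singleton] at hy
    subst hy; exact hrefl _
  | succ n ih =>
    obtain ⟨hmem, hdom, hodd⟩ := ih
    by_cases h : n % 2 = 0
    · have hs : socSeq E hsent f (n + 1) =
        (insert ((hsent (insert (f (n / 2)) (socSeq E hsent f n).1)).choose)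
          (socSeq E hsent f n).1,
         (hsent (insert (f (n / 2)) (socSeq E hsent f n).1)).choose) := by
        simp [socSeq, h]
      set v := (hsent (insert (f (n / 2)) (socSeq E hsent f n).1)).choose with hv
      have hvspec := (hsent (insert (f (n / 2)) (socSeq E hsent f n).1)).choose_spec
      rw [hs]
      refine ⟨Finset.mem_insert_self _ _, ?_, ?_⟩
      · intro y hy
        rcases Finset.mem_insert.1 hy with rfl | hy
        · exact hrefl _
        · exact hvspec y (Finset.mem_insert_of_mem hy)
      · intro _
        have : (n + 1) / 2 = n / 2 := by omega
        rw [this]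
        exact hvspec _ (Finset.mem_insert_self _ _)
    · have h1 : n % 2 = 1 := by omega
      have hs : socSeq E hsent f (n + 1) =
        (insert (f (n / 2)) (socSeq E hsent f n).1, (socSeq E hsent f n).2) := by
        simp [socSeq, h]
      rw [hs]
      refine ⟨Finset.mem_insert_of_mem hmem, ?_, by omega⟩
      intro y hy
      rcases Finset.mem_insert.1 hy with rfl | hy
      · exact hodd h1
      · exact hdom y hy

/-- Let G be a nonempty countable graph such that for every
finite set A ⊆ G there exists a vertex of G adjacent to all elements of A.
Then G is sociable. -/
theorem stmt_17 {G : Type*} [Countable G] [Nonempty G] (E : G → G → Prop)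
    (hrefl : ∀ x, E x x) (hsymm : ∀ x y, E x y → E y x)
    (hsent : ∀ A : Finset G, ∃ v : G, ∀ a ∈ A, E v a) :
    Sociable E := by
  classical
  obtain ⟨f, hf⟩ := exists_surjective_nat G
  set S : ℕ → Finset G := fun n => (socSeq E hsent f n).1 with hS
  set u : ℕ → G := fun n => (socSeq E hsent f n).2 with hu
  have hinv := socSeq_inv E hrefl hsent f
  -- The new vertex added at step n
  have hstep : ∀ n, ∃ w, S (n + 1) = insert w (S n) ∧ E w (u n) := by
    intro n
    by_cases h : n % 2 = 0
    · refine ⟨(hsent (insert (f (n / 2)) (S n))).choose, by simp [hS, socSeq, h], ?_⟩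
      exact (hsent (insert (f (n / 2)) (S n))).choose_spec _
        (Finset.mem_insert_of_mem (hinv n).1)
    · refine ⟨f (n / 2), by simp [hS, socSeq, h], ?_⟩
      have h1 : n % 2 = 1 := by omega
      exact hsymm _ _ ((hinv n).2.2 h1)
  refine ⟨fun n => ↑(S n), ⟨(hsent ∅).choose, by simp [hS, socSeq]⟩, ?_, ?_, ?_, ?_⟩
  · intro n
    obtain ⟨w, hw, -⟩ := hstep n
    show (↑(S n) : Set G) ⊆ ↑(S (n + 1))
    rw [hw]
    intro x hx
    exact_mod_cast Finset.mem_insert_of_mem (by exact_mod_cast hx)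
  · intro n
    obtain ⟨w, hw, -⟩ := hstep n
    intro x hx y hy
    simp only at hx hy
    rw [hw] at hx hy
    simp only [Set.mem_diff, Finset.coe_insert, Set.mem_insert_iff, Finset.mem_coe] at hx hy
    rcases hx.1 with rfl | hx1
    · rcases hy.1 with rfl | hy1
      · rfl
      · exact absurd hy1 hy.2
    · exact absurd hx1 hx.2
  · apply Set.eq_univ_of_forall
    intro x
    obtain ⟨k, rfl⟩ := hf x
    refine Set.mem_iUnion.2 ⟨2 * k + 2, ?_⟩
    have h1 : (2 * k + 1) % 2 = 1 := by omega
    have h2 : ¬ (2 * k + 1) % 2 = 0 := by omega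
    have : S (2 * k + 2) = insert (f ((2 * k + 1) / 2)) (S (2 * k + 1)) := by
      simp [hS, socSeq, h2]
    have hk : (2 * k + 1) / 2 = k := by omega
    rw [this, hk]
    exact_mod_cast Finset.mem_insert_self _ _
  · intro n
    obtain ⟨w, hw, hwu⟩ := hstep n
    refine ⟨fun x => if x ∈ S n then x else u n, ?_, ?_, ?_, ?_⟩
    · intro x hx
      by_cases h : x ∈ S n
      · simp [h]
      · simp only [h, if_false]
        exact (hinv n).1
    · intro x hx
      simp [Finset.mem_coe.1 hx]
    · intro x hx y hy hxy
      have hdom := (hinv n).2.1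
      by_cases h1 : x ∈ S n <;> by_cases h2 : y ∈ S n <;> simp [h1, h2]
      · exact hxy
      · exact hsymm _ _ (hdom x h1)
      · exact hdom y h2
      · exact hrefl _
    · intro z hz
      simp only at hz
      rw [hw] at hz
      simp only [Set.mem_diff, Finset.coe_insert, Set.mem_insert_iff, Finset.mem_coe] at hz
      rcases hz.1 with rfl | h
      · simp only [hz.2, if_false]
        exact hwu
      · exact absurd h hz.2
end

section
/- There exists a closed reflexive symmetric relation E on the Cantor space 2^ℕ and a countable topologically dense set D ⊆ 2^ℕ such that the induced graph on D satisfies property (R) (and hence is isomorphic to the random graph), and the graph (2^ℕ, E) has no isolated vertices, i.e. every x ∈ 2^ℕ is adjacent to some y ≠ x. -/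
/-!
Non-adjacency is made to depend on finitely many coordinates, hence open. If `x ≠ y` first
differ at `n`, call `t` the one with `t n = true` and `s` the other; let `m` be the first zero of
`t` after `n`. The pair is declared non-adjacent iff `t` is `true` at position `m + 1 + c`, where
`c` encodes `s` on `[0, m)`; the offset `m + 1` keeps these table positions clear of the run.

For (R) on the eventually-`false` sequences: every `u` with a zero below `M` first differs from a
sequence `1^M 0 τ` at a zero of `u`, so `τ` is a lookup table indexed by the codes of the `u`'s,
and we can make it list exactly the codes of `B`. No vertex is isolated: if `x k = false`, the
sequence agreeing with `x` below `k` and `true` from `k` on is a neighbour, as it has no zero after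
`k`; if `x` has no zero, the constant `false` sequence is one.
-/

open Filter PiNat

def prefixCode (s : ℕ → Bool) (m : ℕ) : ℕ :=
  Encodable.encode ((List.range m).map s)

lemma prefixCode_eq_iff {s s' : ℕ → Bool} {m : ℕ} :
    prefixCode s m = prefixCode s' m ↔ ∀ i < m, s i = s' i := by
  simp [prefixCode, List.map_inj_left]

def Rejects (t s : ℕ → Bool) : Prop :=
  ∃ n, (∀ i < n, t i = s i) ∧ t n = true ∧ s n = false ∧
    ∃ m, n < m ∧ (∀ j, n < j → j < m → t j = true) ∧ t m = false ∧
      t (m + 1 + prefixCode s m) = true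

def NonAdj (x y : ℕ → Bool) : Prop := Rejects x y ∨ Rejects y x

lemma nonAdj_comm {x y : ℕ → Bool} : NonAdj x y ↔ NonAdj y x := or_comm

lemma not_nonAdj_self (x : ℕ → Bool) : ¬ NonAdj x x := by
  rintro (⟨_, -, h, h', -⟩ | ⟨_, -, h, h', -⟩) <;> simp_all

lemma isOpen_setOf_rejects :
    IsOpen {p : (ℕ → Bool) × (ℕ → Bool) | Rejects p.1 p.2} := by
  refine isOpen_iff_mem_nhds.2 ?_
  rintro ⟨x, y⟩ (hp : Rejects x y)
  obtain ⟨n, hxy, hxn, hyn, m, hnm, hrun, hxm, hptr⟩ := hp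
  set K := m + 2 + prefixCode y m
  filter_upwards [((isOpen_cylinder _ x K).prod (isOpen_cylinder _ y K)).mem_nhds
    ⟨self_mem_cylinder x K, self_mem_cylinder y K⟩]
  rintro ⟨x', y'⟩ ⟨hx, hy⟩
  simp only [mem_cylinder_iff] at hx hy
  show Rejects x' y'
  have hcode : prefixCode y' m = prefixCode y m :=
    prefixCode_eq_iff.2 fun i hi => hy i (by omega)
  refine ⟨n, fun i hi => ?_, ?_, ?_, m, hnm, fun j h₁ h₂ => ?_, ?_, ?_⟩
  · rw [hx i (by omega), hy i (by omega), hxy i hi]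
  · rwa [hx n (by omega)]
  · rwa [hy n (by omega)]
  · rw [hx j (by omega)]; exact hrun j h₁ h₂
  · rwa [hx m (by omega)]
  · rwa [hcode, hx _ (by omega)]

lemma isOpen_setOf_nonAdj :
    IsOpen {p : (ℕ → Bool) × (ℕ → Bool) | NonAdj p.1 p.2} :=
  isOpen_setOf_rejects.union (isOpen_setOf_rejects.preimage continuous_swap)

lemma exists_ne_not_nonAdj (x : ℕ → Bool) : ∃ y, y ≠ x ∧ ¬ NonAdj x y := by
  by_cases h : ∃ k, x k = false
  · obtain ⟨k, hk⟩ := h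
    refine ⟨fun j => if j < k then x j else true,
      fun he => by simpa [hk] using congrFun he k, ?_⟩
    rintro (⟨n, -, hxn, hyn, -⟩ | ⟨n, -, hyn, hxn, m, hnm, -, hym, -⟩)
    · dsimp only at hyn
      split_ifs at hyn; simp_all
    · have hmk : m < k := by by_contra hmk; simp [hmk] at hym
      simp_all [show n < k by omega]
  · push Not at h
    refine ⟨fun _ => false, fun he => by simpa [h 0] using congrFun he 0, ?_⟩
    rintro (⟨_, -, -, -, m, -, -, hxm, -⟩ | ⟨_, -, hyn, -⟩)
    · exact h m hxm
    · exact Bool.false_ne_true hyn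

def EventuallyFalse : Set (ℕ → Bool) := {f | ∀ᶠ k in atTop, f k = false}

lemma countable_eventuallyFalse : EventuallyFalse.Countable := by
  refine (Set.countable_range fun s : Finset ℕ => fun k => decide (k ∈ s)).mono ?_
  intro f hf
  obtain ⟨N, hN⟩ := eventually_atTop.1 hf
  refine ⟨(Finset.range N).filter (f · = true), funext fun k => ?_⟩
  by_cases hk : k < N
  · simp [hk]
  · simp [hk, hN k (by omega)]

lemma dense_eventuallyFalse : Dense EventuallyFalse := by
  refine (isTopologicalBasis_cylinders _).dense_iff.2 ?_
  rintro _ ⟨x, n, rfl⟩ -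
  refine ⟨fun k => if k < n then x k else false, fun i hi => if_pos hi, ?_⟩
  exact eventually_atTop.2 ⟨n, fun k hk => if_neg (by omega)⟩

def extensionVertex (M : ℕ) (B : Finset (ℕ → Bool)) : ℕ → Bool := fun k =>
  decide (k < M ∨ k ∈ B.image fun b => M + 1 + prefixCode b M)

lemma extensionVertex_mem_eventuallyFalse (M : ℕ) (B : Finset (ℕ → Bool)) :
    extensionVertex M B ∈ EventuallyFalse := by
  refine eventually_atTop.2 ⟨M + 1 + B.sup (prefixCode · M) + 1, fun k hk => ?_⟩
  simp only [extensionVertex, Finset.mem_image, decide_eq_false_iff_not, not_or, not_exists,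
    not_and]
  refine ⟨by omega, fun b hb => ?_⟩
  have := Finset.le_sup (f := (prefixCode · M)) hb
  omega

lemma nonAdj_extensionVertex_iff {M N : ℕ} {B : Finset (ℕ → Bool)} {u : ℕ → Bool}
    (hN : N < M) (hu : u N = false) :
    NonAdj (extensionVertex M B) u ↔ ∃ b ∈ B, prefixCode b M = prefixCode u M := by
  have hlt : ∀ k < M, extensionVertex M B k = true := fun k hk => by simp [extensionVertex, hk]
  have hM : extensionVertex M B M = false := by simp [extensionVertex]; omega
  have hptr : extensionVertex M B (M + 1 + prefixCode u M) = true ↔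
      ∃ b ∈ B, prefixCode b M = prefixCode u M := by
    simp [extensionVertex, show ¬ M + 1 + prefixCode u M < M by omega]
  constructor
  · rintro (⟨n, hagree, hvn, hun, m, hnm, hrun, hvm, hbit⟩ | ⟨n, hagree, hun, hvn, -⟩)
    · have hnN : n ≤ N := by
        by_contra! h
        simpa [hu, hlt N hN] using hagree N h
      obtain rfl : m = M := by
        by_contra hmM
        rcases Nat.lt_or_gt_of_ne hmM with h | h
        · simp [hlt m h] at hvm
        · simp [hrun M (by omega) h] at hM
      exact hptr.1 hbit
    · have hnN : N < n := by
        by_contra! h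
        simp [hlt n (by omega)] at hvn
      simpa [hu, hlt N hN] using hagree N hnN
  · intro hb
    have hex : ∃ n, u n = false := ⟨N, hu⟩
    have hnN : Nat.find hex ≤ N := Nat.find_min' hex hu
    refine .inl ⟨Nat.find hex, fun i hi => ?_, hlt _ (by omega), Nat.find_spec hex, M, by omega,
      fun j _ hj => hlt j hj, hM, hptr.2 hb⟩
    rw [hlt i (by omega)]
    simpa using Nat.find_min hex hi

theorem exists_adj_nonAdj (A B : Finset (ℕ → Bool)) (hA : ↑A ⊆ EventuallyFalse)
    (hB : ↑B ⊆ EventuallyFalse) (hAB : Disjoint A B) :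
    ∃ v ∈ EventuallyFalse, v ∉ A ∧ v ∉ B ∧ (∀ a ∈ A, ¬ NonAdj v a) ∧
      ∀ b ∈ B, NonAdj v b := by
  classical
  obtain ⟨N, hN⟩ : ∃ N, ∀ k ≥ N, ∀ u ∈ A ∪ B, u k = false := by
    refine eventually_atTop.1 ((eventually_all_finset _).2 fun u hu => ?_)
    rcases Finset.mem_union.1 hu with hu | hu
    exacts [hA hu, hB hu]
  set v := extensionVertex (N + 1) B
  have key : ∀ u ∈ A ∪ B, NonAdj v u ↔ u ∈ B := by
    intro u hu
    rw [nonAdj_extensionVertex_iff N.lt_succ_self (hN N le_rfl u hu)]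
    refine ⟨fun ⟨b, hb, hcode⟩ => ?_, fun hu => ⟨u, hu, rfl⟩⟩
    convert hb
    funext k
    by_cases hk : k < N + 1
    · exact (prefixCode_eq_iff.1 hcode k hk).symm
    · rw [hN k (by omega) u hu, hN k (by omega) b (Finset.mem_union_right _ hb)]
  have hv : ∀ u ∈ A ∪ B, v ≠ u := by
    rintro u hu rfl
    simpa [v, extensionVertex] using hN N le_rfl v hu
  refine ⟨v, extensionVertex_mem_eventuallyFalse _ _,
    fun h => hv v (Finset.mem_union_left _ h) rfl, fun h => hv v (Finset.mem_union_right _ h) rfl,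
    fun a ha => ?_, fun b hb => ?_⟩
  · exact (key a (Finset.mem_union_left _ ha)).not.2 (Finset.disjoint_left.1 hAB ha)
  · exact (key b (Finset.mem_union_right _ hb)).2 hb

/-- There exists a closed reflexive symmetric relation E on the
Cantor space 2^ℕ and a countable topologically dense set D ⊆ 2^ℕ such that the
induced graph on D satisfies property (R) (hence is isomorphic to the random
graph), and the graph (2^ℕ, E) has no isolated vertices. -/
theorem stmt_18 :
    ∃ E : (ℕ → Bool) → (ℕ → Bool) → Prop,
      IsClosed {p : (ℕ → Bool) × (ℕ → Bool) | E p.1 p.2} ∧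
      (∀ x, E x x) ∧
      (∀ x y, E x y → E y x) ∧
      ∃ D : Set (ℕ → Bool),
        D.Countable ∧ Dense D ∧
        (∀ A B : Finset (ℕ → Bool), ↑A ⊆ D → ↑B ⊆ D → Disjoint A B →
          ∃ v ∈ D, v ∉ A ∧ v ∉ B ∧ (∀ a ∈ A, E v a) ∧ (∀ b ∈ B, ¬ E v b)) ∧
        (∀ x : ℕ → Bool, ∃ y, y ≠ x ∧ E x y) := by
  refine ⟨fun x y => ¬ NonAdj x y, isOpen_setOf_nonAdj.isClosed_compl, not_nonAdj_self,
    fun _ _ h => mt nonAdj_comm.1 h, EventuallyFalse, countable_eventuallyFalse,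
    dense_eventuallyFalse, fun A B hA hB hAB => ?_, exists_ne_not_nonAdj⟩
  obtain ⟨v, hv, hvA, hvB, hadj, hnonadj⟩ := exists_adj_nonAdj A B hA hB hAB
  exact ⟨v, hv, hvA, hvB, hadj, fun b hb => not_not.2 (hnonadj b hb)⟩
end

section
/- Let ℓ > 2 and let H be a countable graph that is K_ℓ-free and satisfies the Henson extension property for ℓ: for every pair of disjoint finite sets A, B ⊆ H such that the induced subgraph on A is K_{ℓ−1}-free, there exists v ∈ H \ (A ∪ B) adjacent to every element of A and to no element of B. Then H is not finitely retractable. -/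
/-- A graph `(X, E)` is K_m-free if it contains no m pairwise distinct,
pairwise adjacent vertices. -/
def KFree {X : Type*} (E : X → X → Prop) (m : ℕ) : Prop :=
  ¬ ∃ s : Finset X, s.card = m ∧ ∀ x ∈ s, ∀ y ∈ s, x ≠ y → E x y

/-- The induced subgraph on a finite set A is K_m-free. -/
def KFreeOn {X : Type*} (E : X → X → Prop) (m : ℕ) (A : Finset X) : Prop :=
  ¬ ∃ s : Finset X, s ⊆ A ∧ s.card = m ∧ ∀ x ∈ s, ∀ y ∈ s, x ≠ y → E x y

lemma kfreeOn_of_card_lt {X : Type*} (E : X → X → Prop) (m : ℕ) (A : Finset X)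
    (h : A.card < m) : KFreeOn E m A := by
  rintro ⟨s, hsub, hcard, -⟩
  have := Finset.card_le_card hsub
  omega

lemma kfreeOn_indep {X : Type*} (E : X → X → Prop) (A : Finset X)
    (h : ∀ x ∈ A, ∀ y ∈ A, x ≠ y → ¬ E x y) : KFreeOn E 2 A := by
  rintro ⟨s, hsub, hcard, hpair⟩
  have h1 : 1 < s.card := by omega
  obtain ⟨x, hx, y, hy, hne⟩ := Finset.one_lt_card.mp h1
  exact h x (hsub hx) y (hsub hy) hne (hpair x hx y hy hne)

lemma build_family {H : Type*} (ℓ : ℕ) (E : H → H → Prop)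
    (hHenson : ∀ A B : Finset H, Disjoint A B → KFreeOn E (ℓ - 1) A →
      ∃ v : H, v ∉ A ∧ v ∉ B ∧ (∀ a ∈ A, E v a) ∧ (∀ b ∈ B, ¬ E v b))
    (A Base : Finset H) (hfree : KFreeOn E (ℓ - 1) A) :
    ∃ g : ℕ → H,
      (∀ n, ∀ a ∈ A, E (g n) a) ∧
      (∀ n, ∀ b ∈ Base, b ∉ A → ¬ E (g n) b) ∧
      (∀ n m, m < n → ¬ E (g n) (g m)) ∧
      (∀ n m, m < n → g n ≠ g m) ∧
      (∀ n, g n ∉ A) ∧ (∀ n, g n ∉ Base) := by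
  classical
  have key : ∀ s : Finset H, ∃ v : H, v ∉ A ∧ v ∉ (Base ∪ s) \ A ∧
      (∀ a ∈ A, E v a) ∧ (∀ b ∈ (Base ∪ s) \ A, ¬ E v b) := by
    intro s
    exact hHenson A ((Base ∪ s) \ A) (Finset.sdiff_disjoint).symm hfree
  set step : Finset H → H := fun s => (key s).choose with hstep
  have hspec : ∀ s : Finset H, (step s) ∉ A ∧ (step s) ∉ (Base ∪ s) \ A ∧
      (∀ a ∈ A, E (step s) a) ∧ (∀ b ∈ (Base ∪ s) \ A, ¬ E (step s) b) :=
    fun s => (key s).choose_spec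
  set acc : ℕ → Finset H := fun n => Nat.rec (∅ : Finset H)
    (fun _ s => insert (step s) s) n with hacc
  have haccS : ∀ n, acc (n+1) = insert (step (acc n)) (acc n) := fun n => rfl
  set g : ℕ → H := fun n => step (acc n) with hg
  have hmem : ∀ n m, m < n → g m ∈ acc n := by
    intro n
    induction n with
    | zero => omega
    | succ k ih =>
      intro m hm
      rw [haccS]
      rcases Nat.lt_succ_iff_lt_or_eq.mp hm with h | h
      · exact Finset.mem_insert_of_mem (ih m h)
      · subst h; exact Finset.mem_insert_self _ _
  have hBmem : ∀ n m, m < n → g m ∈ (Base ∪ acc n) \ A := by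
    intro n m hm
    refine Finset.mem_sdiff.mpr ⟨Finset.mem_union_right _ (hmem n m hm), (hspec (acc m)).1⟩
  refine ⟨g, ?_, ?_, ?_, ?_, ?_, ?_⟩
  · intro n a ha; exact (hspec (acc n)).2.2.1 a ha
  · intro n b hb hbA
    exact (hspec (acc n)).2.2.2 b (Finset.mem_sdiff.mpr ⟨Finset.mem_union_left _ hb, hbA⟩)
  · intro n m hm; exact (hspec (acc n)).2.2.2 _ (hBmem n m hm)
  · intro n m hm heq
    have h2 := hBmem n m hm
    rw [← heq] at h2
    exact (hspec (acc n)).2.1 h2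
  · intro n; exact (hspec (acc n)).1
  · intro n hbase
    exact (hspec (acc n)).2.1
      (Finset.mem_sdiff.mpr ⟨Finset.mem_union_left _ hbase, (hspec (acc n)).1⟩)

lemma stage_kfree {H : Type*} [DecidableEq H] (E : H → H → Prop) (ℓ L : ℕ)
    (hl : 4 ≤ ℓ) (hL : L = ℓ - 1)
    (c : Fin L → H) (hcinj : Function.Injective c)
    (d : H) (i : Fin L) (W : Finset H)
    (hdc : ∀ k, ¬ E d (c k))
    (hdC : ∀ k, d ≠ c k)
    (hWC : ∀ w ∈ W, ∀ k, w ≠ c k) (hWd : ∀ w ∈ W, w ≠ d)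
    (hWW : ∀ w ∈ W, ∀ w' ∈ W, w ≠ w' → ¬ E w w')
    (hWc : ∀ w ∈ W, ∃ k : Fin L, k ≠ i ∧ ¬ E w (c k)) :
    KFreeOn E (ℓ - 1) (insert d (((Finset.univ.image c).erase (c i)) ∪ W)) := by
  classical
  set CS : Finset H := Finset.univ.image c with hCS
  have hCScard : CS.card = L := by
    rw [hCS, Finset.card_image_of_injective _ hcinj, Finset.card_univ, Fintype.card_fin]
  have hLge : 3 ≤ L := by omega
  rintro ⟨s, hsub, hcard, hpair⟩
  have hcard' : s.card = L := by omega
  have hdecomp : ∀ x ∈ s, x = d ∨ (x ∈ CS.erase (c i)) ∨ x ∈ W := by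
    intro x hx
    have := hsub hx
    simp only [Finset.mem_insert, Finset.mem_union] at this
    tauto
  by_cases hd : d ∈ s
  · have hnoc : ∀ k : Fin L, c k ∉ s := by
      intro k hk
      exact hdc k (hpair d hd (c k) hk (hdC k))
    have hsw : ∀ x ∈ s, ∀ y ∈ s, x ∈ W → y ∈ W → x = y := by
      intro x hx y hy hxW hyW
      by_contra hne
      exact hWW x hxW y hyW hne (hpair x hx y hy hne)
    have hsub2 : ∃ w, s ⊆ insert d {w} := by
      by_cases hW : ∃ w ∈ s, w ∈ W
      · obtain ⟨w, hws, hwW⟩ := hW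
        refine ⟨w, fun x hx => ?_⟩
        rcases hdecomp x hx with h | h | h
        · simp [h]
        · exfalso
          obtain ⟨k, -, rfl⟩ := Finset.mem_image.mp (Finset.mem_of_mem_erase h)
          exact hnoc _ hx
        · simp [hsw x hx w hws h hwW]
      · refine ⟨d, fun x hx => ?_⟩
        rcases hdecomp x hx with h | h | h
        · simp [h]
        · exfalso
          obtain ⟨k, -, rfl⟩ := Finset.mem_image.mp (Finset.mem_of_mem_erase h)
          exact hnoc _ hx
        · exact absurd ⟨x, hx, h⟩ hW
    obtain ⟨w, hw⟩ := hsub2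
    have := Finset.card_le_card hw
    have h2 : (insert d ({w} : Finset H)).card ≤ 2 := by
      apply le_trans (Finset.card_insert_le _ _); simp
    omega
  · by_cases hWs : ∃ w ∈ s, w ∈ W
    · obtain ⟨w, hws, hwW⟩ := hWs
      obtain ⟨k, hki, hwk⟩ := hWc w hwW
      have hck : c k ∉ s := by
        intro hk
        exact hwk (hpair w hws (c k) hk (hWC w hwW k))
      have hsw : ∀ x ∈ s, x ∈ W → x = w := by
        intro x hx hxW
        by_contra hne
        exact hWW x hxW w hwW hne (hpair x hx w hws hne)
      have hsub2 : s ⊆ insert w ((CS.erase (c i)).erase (c k)) := by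
        intro x hx
        rcases hdecomp x hx with h | h | h
        · exact absurd (h ▸ hx) hd
        · refine Finset.mem_insert_of_mem (Finset.mem_erase.mpr ⟨?_, h⟩)
          intro heq
          exact hck (heq ▸ hx)
        · simp [hsw x hx h]
      have hb := Finset.card_le_card hsub2
      have hkmem : c k ∈ CS.erase (c i) := by
        refine Finset.mem_erase.mpr ⟨fun h => hki (hcinj h), ?_⟩
        exact Finset.mem_image.mpr ⟨k, Finset.mem_univ _, rfl⟩
      have hc1 : (CS.erase (c i)).card = L - 1 := by
        rw [Finset.card_erase_of_mem, hCScard]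
        exact Finset.mem_image.mpr ⟨i, Finset.mem_univ _, rfl⟩
      have hc2 : ((CS.erase (c i)).erase (c k)).card = L - 2 := by
        rw [Finset.card_erase_of_mem hkmem, hc1]
        omega
      have := Finset.card_insert_le w ((CS.erase (c i)).erase (c k))
      omega
    · have hsub2 : s ⊆ CS.erase (c i) := by
        intro x hx
        rcases hdecomp x hx with h | h | h
        · exact absurd (h ▸ hx) hd
        · exact h
        · exact absurd ⟨x, hx, h⟩ hWs
      have := Finset.card_le_card hsub2
      have hc1 : (CS.erase (c i)).card = L - 1 := by
        rw [Finset.card_erase_of_mem, hCScard]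
        exact Finset.mem_image.mpr ⟨i, Finset.mem_univ _, rfl⟩
      omega
/-- Let ℓ > 2 and let H be a countable K_ℓ-free graph satisfying
the Henson extension property for ℓ: for all disjoint finite A, B ⊆ H with the
induced subgraph on A being K_{ℓ−1}-free, there exists v ∈ H \ (A ∪ B)
adjacent to every element of A and to no element of B. Then H is not finitely
retractable. -/
theorem stmt_19 {H : Type*} [Countable H] (ℓ : ℕ) (hℓ : 2 < ℓ)
    (E : H → H → Prop)
    (hrefl : ∀ x, E x x) (hsymm : ∀ x y, E x y → E y x)
    (hKfree : KFree E ℓ)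
    (hHenson : ∀ A B : Finset H, Disjoint A B → KFreeOn E (ℓ - 1) A →
      ∃ v : H, v ∉ A ∧ v ∉ B ∧ (∀ a ∈ A, E v a) ∧ (∀ b ∈ B, ¬ E v b)) :
    ¬ FinitelyRetractable E := by
  intro hFR
  classical
  set L := ℓ - 1 with hLdef
  have hL2 : 2 ≤ L := by omega
  -- vertex creation
  have hvertex : ∀ B : Finset H, ∃ v, v ∉ B ∧ (∀ b ∈ B, ¬ E v b) := by
    intro B
    obtain ⟨v, -, hvB, -, hnB⟩ := hHenson ∅ B (by simp)
      (kfreeOn_of_card_lt E _ ∅ (by rw [Finset.card_empty]; omega))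
    exact ⟨v, hvB, hnB⟩
  -- clique builder
  have hclique : ∀ n, n ≤ L → ∃ cc : ℕ → H,
      (∀ k k', k < n → k' < n → k ≠ k' → E (cc k) (cc k')) ∧
      (∀ k k', k < n → k' < n → k ≠ k' → cc k ≠ cc k') := by
    intro n
    induction n with
    | zero =>
      intro _
      obtain ⟨v, -, -⟩ := hvertex ∅
      exact ⟨fun _ => v, fun k k' hk => absurd hk (Nat.not_lt_zero k),
        fun k k' hk => absurd hk (Nat.not_lt_zero k)⟩
    | succ m ih =>
      intro hm
      obtain ⟨cc, hE, hI⟩ := ih (by omega)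
      have hAcard : ((Finset.range m).image cc).card < ℓ - 1 := by
        calc ((Finset.range m).image cc).card ≤ m := by
              simpa using Finset.card_image_le (s := Finset.range m) (f := cc)
          _ < ℓ - 1 := by omega
      obtain ⟨v, hvA, -, hvE, -⟩ := hHenson ((Finset.range m).image cc) ∅ (by simp)
        (kfreeOn_of_card_lt E _ _ hAcard)
      have hvcc : ∀ k, k < m → E v (cc k) := by
        intro k hk
        exact hvE _ (Finset.mem_image.mpr ⟨k, Finset.mem_range.mpr hk, rfl⟩)
      have hvne : ∀ k, k < m → v ≠ cc k := by
        intro k hk heq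
        exact hvA (heq ▸ Finset.mem_image.mpr ⟨k, Finset.mem_range.mpr hk, rfl⟩)
      refine ⟨fun k => if k = m then v else cc k, ?_, ?_⟩
      · intro k k' hk hk' hne
        by_cases h1 : k = m <;> by_cases h2 : k' = m
        · omega
        · simp only [if_pos h1, if_neg h2]
          exact hvcc k' (by omega)
        · simp only [if_neg h1, if_pos h2]
          exact hsymm _ _ (hvcc k (by omega))
        · simp only [if_neg h1, if_neg h2]
          exact hE k k' (by omega) (by omega) hne
      · intro k k' hk hk' hne
        by_cases h1 : k = m <;> by_cases h2 : k' = m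
        · omega
        · simp only [if_pos h1, if_neg h2]
          exact hvne k' (by omega)
        · simp only [if_neg h1, if_pos h2]
          exact fun heq => hvne k (by omega) heq.symm
        · simp only [if_neg h1, if_neg h2]
          exact hI k k' (by omega) (by omega) hne
  obtain ⟨cc, hccE, hccI⟩ := hclique L le_rfl
  set c : Fin L → H := fun k => cc k with hc
  have hcE : ∀ k k' : Fin L, k ≠ k' → E (c k) (c k') := by
    intro k k' h
    exact hccE k k' k.isLt k'.isLt (fun hh => h (Fin.ext hh))
  have hcinj : Function.Injective c := by
    intro k k' h
    by_contra hne
    exact hccI k k' k.isLt k'.isLt (fun hh => hne (Fin.ext hh)) h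
  set CS : Finset H := Finset.univ.image c with hCSdef
  have hmemCS : ∀ k, c k ∈ CS := fun k => Finset.mem_image.mpr ⟨k, Finset.mem_univ _, rfl⟩
  have hCScard : CS.card = L := by
    rw [hCSdef, Finset.card_image_of_injective _ hcinj, Finset.card_univ, Fintype.card_fin]
  -- d, e, f
  obtain ⟨d, hdCS, hdB⟩ := hvertex CS
  have hdc : ∀ k, ¬ E d (c k) := fun k => hdB _ (hmemCS k)
  have hcd : ∀ k, ¬ E (c k) d := fun k h => hdc k (hsymm _ _ h)
  have hdC : ∀ k, d ≠ c k := fun k h => hdCS (h ▸ hmemCS k)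
  obtain ⟨e, heM, heB⟩ := hvertex (insert d CS)
  have hec : ∀ k, ¬ E e (c k) := fun k => heB _ (Finset.mem_insert_of_mem (hmemCS k))
  have hed : ¬ E e d := heB _ (Finset.mem_insert_self _ _)
  have heC : ∀ k, e ≠ c k := fun k h => heM (h ▸ Finset.mem_insert_of_mem (hmemCS k))
  have heD : e ≠ d := fun h => heM (h ▸ Finset.mem_insert_self _ _)
  obtain ⟨f, hfM, hfB⟩ := hvertex (insert e (insert d CS))
  have hfc : ∀ k, ¬ E f (c k) := fun k =>
    hfB _ (Finset.mem_insert_of_mem (Finset.mem_insert_of_mem (hmemCS k)))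
  have hfd : ¬ E f d := hfB _ (Finset.mem_insert_of_mem (Finset.mem_insert_self _ _))
  have hfe : ¬ E f e := hfB _ (Finset.mem_insert_self _ _)
  have hfC : ∀ k, f ≠ c k := fun k h =>
    hfM (h ▸ Finset.mem_insert_of_mem (Finset.mem_insert_of_mem (hmemCS k)))
  have hfD : f ≠ d := fun h => hfM (h ▸ Finset.mem_insert_of_mem (Finset.mem_insert_self _ _))
  have hfE : f ≠ e := fun h => hfM (h ▸ Finset.mem_insert_self _ _)
  -- retraction
  set F : Finset H := insert f (insert e (insert d CS)) with hFdef
  obtain ⟨r, ⟨hhom, hidem⟩, hfin, hFsub⟩ := hFR F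
  set Sfin := hfin.toFinset with hSfin
  have hSmem : ∀ x, x ∈ Sfin ↔ x ∈ Set.range r := fun x => Set.Finite.mem_toFinset hfin
  have hrange : ∀ x, r x ∈ Sfin := fun x => (hSmem _).mpr ⟨x, rfl⟩
  have hfix : ∀ x ∈ Sfin, r x = x := by
    intro x hx
    obtain ⟨y, rfl⟩ := (hSmem x).mp hx
    exact hidem y
  have hFS : ∀ x ∈ F, x ∈ Sfin := fun x hx => (hSmem x).mpr (hFsub hx)
  have hcS : ∀ k, c k ∈ Sfin := fun k => hFS _ (by
    simp only [hFdef, Finset.mem_insert]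
    exact Or.inr (Or.inr (Or.inr (hmemCS k))))
  have hdS : d ∈ Sfin := hFS _ (by simp [hFdef])
  have heS : e ∈ Sfin := hFS _ (by simp [hFdef])
  have hfS : f ∈ Sfin := hFS _ (by simp [hFdef])
  have hrc : ∀ k, r (c k) = c k := fun k => hfix _ (hcS k)
  have hrd : r d = d := hfix _ hdS
  have hre : r e = e := hfix _ heS
  have hrf : r f = f := hfix _ hfS
  by_cases hl4 : 4 ≤ ℓ
  · -- general case ℓ ≥ 4
    have main : ∀ i, i ≤ L → ∃ (z : ℕ → H) (R : ℕ → Finset H),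
        (∀ j, j < i → E (z j) d) ∧
        (∀ j, j < i → ∀ k : Fin L, (k : ℕ) ≠ j → E (z j) (c k)) ∧
        (∀ j j', j < i → j' < i → j ≠ j' → E (z j) (z j')) ∧
        (∀ j, j < i → L - i ≤ (R j).card) ∧
        (∀ j, j < i → ∀ u ∈ R j, r u = z j) ∧
        (∀ j, j < i → ∀ u ∈ R j, ∀ k : Fin L, (k : ℕ) = j → ¬ E u (c k)) ∧
        (∀ j, j < i → ∀ u ∈ R j, ∀ u' ∈ R j, u ≠ u' → ¬ E u u') ∧
        (∀ j j', j < i → j' < i → j ≠ j' → ∀ u ∈ R j, ∀ u' ∈ R j', ¬ E u u') ∧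
        (∀ j, j < i → ∀ u ∈ R j, u ∉ Sfin) := by
      intro i
      induction i with
      | zero =>
        intro _
        exact ⟨fun _ => d, fun _ => ∅,
          fun j hj => absurd hj (Nat.not_lt_zero j),
          fun j hj => absurd hj (Nat.not_lt_zero j),
          fun j j' hj => absurd hj (Nat.not_lt_zero j),
          fun j hj => absurd hj (Nat.not_lt_zero j),
          fun j hj => absurd hj (Nat.not_lt_zero j),
          fun j hj => absurd hj (Nat.not_lt_zero j),
          fun j hj => absurd hj (Nat.not_lt_zero j),
          fun j j' hj => absurd hj (Nat.not_lt_zero j),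
          fun j hj => absurd hj (Nat.not_lt_zero j)⟩
      | succ i ih =>
        intro hi1
        obtain ⟨z, R, h1, h2, h3, h4, h5, h6, h7, h8, h9⟩ := ih (by omega)
        have hiL : i < L := by omega
        set ci : Fin L := ⟨i, hiL⟩ with hcidef
        have hpick : ∀ j, j < i → ∃ u, u ∈ R j := by
          intro j hj
          have := h4 j hj
          have hpos : 0 < (R j).card := by omega
          exact Finset.card_pos.mp hpos
        set w : ℕ → H := fun j => if hj : j < i then (hpick j hj).choose else d with hwdef
        have hwmem : ∀ j, j < i → w j ∈ R j := by
          intro j hj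
          simp only [hwdef, dif_pos hj]
          exact (hpick j hj).choose_spec
        set W : Finset H := (Finset.range i).image w with hWdef
        have hWfacts : ∀ x ∈ W, ∃ j, j < i ∧ x = w j := by
          intro x hx
          obtain ⟨j, hj, rfl⟩ := Finset.mem_image.mp hx
          exact ⟨j, Finset.mem_range.mp hj, rfl⟩
        have hWnS : ∀ x ∈ W, x ∉ Sfin := by
          intro x hx
          obtain ⟨j, hj, rfl⟩ := hWfacts x hx
          exact h9 j hj _ (hwmem j hj)
        set A : Finset H := insert d ((CS.erase (c ci)) ∪ W) with hAdef
        have hAfree : KFreeOn E (ℓ - 1) A := by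
          apply stage_kfree E ℓ L hl4 hLdef c hcinj d ci W hdc hdC
          · intro x hx k heq
            exact hWnS x hx (heq ▸ hcS k)
          · intro x hx heq
            exact hWnS x hx (heq ▸ hdS)
          · intro x hx y hy hne
            obtain ⟨j, hj, rfl⟩ := hWfacts x hx
            obtain ⟨j', hj', rfl⟩ := hWfacts y hy
            have hjj : j ≠ j' := fun hh => hne (by rw [hh])
            exact h8 j j' hj hj' hjj _ (hwmem j hj) _ (hwmem j' hj')
          · intro x hx
            obtain ⟨j, hj, rfl⟩ := hWfacts x hx
            refine ⟨⟨j, by omega⟩, ?_, ?_⟩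
            · intro hh
              have := congrArg Fin.val hh
              simp only [hcidef] at this
              omega
            · exact h6 j hj _ (hwmem j hj) _ rfl
        set Rall : Finset H := (Finset.range i).biUnion R with hRalldef
        set Base : Finset H := Sfin ∪ Rall with hBasedef
        obtain ⟨g, hgA, hgB, hgE, hgNe, hgnA, hgnB⟩ := build_family ℓ E hHenson A Base hAfree
        have hdA : d ∈ A := Finset.mem_insert_self _ _
        have hcA : ∀ k : Fin L, (k : ℕ) ≠ i → c k ∈ A := by
          intro k hk
          refine Finset.mem_insert_of_mem
            (Finset.mem_union_left _ (Finset.mem_erase.mpr ⟨?_, hmemCS k⟩))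
          intro heq
          have := congrArg Fin.val (hcinj heq)
          simp only [hcidef] at this
          exact hk this
        have hwA : ∀ j, j < i → w j ∈ A := fun j hj =>
          Finset.mem_insert_of_mem (Finset.mem_union_right _
            (Finset.mem_image.mpr ⟨j, Finset.mem_range.mpr hj, rfl⟩))
        -- pigeonhole
        set M : ℕ := Sfin.card * L + 1 with hMdef
        have hmaps : ∀ n ∈ Finset.range M, r (g n) ∈ Sfin := fun n _ => hrange _
        have hSne : Sfin.Nonempty := ⟨d, hdS⟩
        have hcardM : Sfin.card * L ≤ (Finset.range M).card := by
          rw [Finset.card_range]; omega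
        obtain ⟨y, hyS, hyL⟩ :=
          Finset.exists_le_card_fiber_of_mul_le_card_of_maps_to hmaps hSne hcardM
        set fib := (Finset.range M).filter (fun n => r (g n) = y) with hfibdef
        have hginj : ∀ {n m : ℕ}, g n = g m → n = m := by
          intro n m h
          rcases lt_trichotomy n m with hh | hh | hh
          · exact absurd h.symm (hgNe m n hh)
          · exact hh
          · exact absurd h (hgNe n m hh)
        set Rnew := fib.image g with hRnewdef
        have hRnewcard : L ≤ Rnew.card := by
          rw [hRnewdef, Finset.card_image_of_injOn (fun a _ b _ h => hginj h)]
          exact hyL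
        have hfibne : fib.Nonempty := by
          apply Finset.card_pos.mp
          have : L ≤ fib.card := hyL
          omega
        obtain ⟨n₀, hn₀⟩ := hfibne
        have hval : ∀ n ∈ fib, r (g n) = y := fun n hn => (Finset.mem_filter.mp hn).2
        have hEyd : E y d := by
          have := hhom _ _ (hgA n₀ d hdA)
          rwa [hval n₀ hn₀, hrd] at this
        have hEyc : ∀ k : Fin L, (k : ℕ) ≠ i → E y (c k) := by
          intro k hk
          have := hhom _ _ (hgA n₀ _ (hcA k hk))
          rwa [hval n₀ hn₀, hrc] at this
        have hEyz : ∀ j, j < i → E y (z j) := by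
          intro j hj
          have := hhom _ _ (hgA n₀ _ (hwA j hj))
          rwa [hval n₀ hn₀, h5 j hj _ (hwmem j hj)] at this
        -- facts about Rnew members
        have hRnewfact : ∀ u ∈ Rnew, ∃ n ∈ fib, u = g n := by
          intro u hu
          obtain ⟨n, hn, rfl⟩ := Finset.mem_image.mp hu
          exact ⟨n, hn, rfl⟩
        -- membership/nonmembership for kills
        have hciBase : c ci ∈ Base := Finset.mem_union_left _ (hcS ci)
        have hcinotA : c ci ∉ A := by
          intro hmem
          rw [hAdef] at hmem
          rcases Finset.mem_insert.mp hmem with hh | hh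
          · exact hdC ci hh.symm
          · rcases Finset.mem_union.mp hh with hh2 | hh2
            · exact (Finset.mem_erase.mp hh2).1 rfl
            · exact hWnS _ hh2 (hcS ci)
        have holdnotA : ∀ j, j < i → ∀ u ∈ (R j).erase (w j), u ∉ A := by
          intro j hj u hu hmem
          have huR : u ∈ R j := Finset.mem_of_mem_erase hu
          have hunS : u ∉ Sfin := h9 j hj _ huR
          rw [hAdef] at hmem
          rcases Finset.mem_insert.mp hmem with hh | hh
          · exact hunS (hh ▸ hdS)
          · rcases Finset.mem_union.mp hh with hh2 | hh2
            · obtain ⟨k, -, hk⟩ := Finset.mem_image.mp (Finset.mem_of_mem_erase hh2)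
              exact hunS (hk ▸ hcS k)
            · obtain ⟨j'', hj'', hequ⟩ := hWfacts u hh2
              by_cases hjj : j'' = j
              · exact (Finset.mem_erase.mp hu).1 (hequ.trans (by rw [hjj]))
              · have := h8 j j'' hj hj'' (fun hh3 => hjj hh3.symm) u huR _ (hwmem j'' hj'')
                rw [← hequ] at this
                exact this (hrefl u)
        have holdBase : ∀ j, j < i → ∀ u ∈ (R j).erase (w j), u ∈ Base :=
          fun j hj u hu => Finset.mem_union_right _
            (Finset.mem_biUnion.mpr ⟨j, Finset.mem_range.mpr hj, Finset.mem_of_mem_erase hu⟩)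
        -- assemble
        refine ⟨fun j => if j = i then y else z j,
          fun j => if j = i then Rnew else (R j).erase (w j),
          ?_, ?_, ?_, ?_, ?_, ?_, ?_, ?_, ?_⟩
        · -- (1) E z d
          intro j hj
          by_cases hji : j = i
          · simp only [if_pos hji]; exact hEyd
          · simp only [if_neg hji]; exact h1 j (by omega)
        · -- (2) E z c
          intro j hj k hk
          by_cases hji : j = i
          · simp only [if_pos hji]; exact hEyc k (hji ▸ hk)
          · simp only [if_neg hji]; exact h2 j (by omega) k hk
        · -- (3) E z z
          intro j j' hj hj' hne
          by_cases hji : j = i <;> by_cases hji' : j' = i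
          · omega
          · simp only [if_pos hji, if_neg hji']
            exact hEyz j' (by omega)
          · simp only [if_neg hji, if_pos hji']
            exact hsymm _ _ (hEyz j (by omega))
          · simp only [if_neg hji, if_neg hji']
            exact h3 j j' (by omega) (by omega) hne
        · -- (4) card
          intro j hj
          by_cases hji : j = i
          · simp only [if_pos hji]
            omega
          · simp only [if_neg hji]
            have hji2 : j < i := by omega
            have := h4 j hji2
            rw [Finset.card_erase_of_mem (hwmem j hji2)]
            omega
        · -- (5) r-values
          intro j hj u hu
          by_cases hji : j = i
          · simp only [if_pos hji] at hu ⊢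
            obtain ⟨n, hn, rfl⟩ := hRnewfact u hu
            exact hval n hn
          · simp only [if_neg hji] at hu ⊢
            exact h5 j (by omega) u (Finset.mem_of_mem_erase hu)
        · -- (6) miss-cert
          intro j hj u hu k hk
          by_cases hji : j = i
          · simp only [if_pos hji] at hu
            obtain ⟨n, hn, rfl⟩ := hRnewfact u hu
            have hkci : k = ci := Fin.ext (by simp only [hcidef]; omega)
            rw [hkci]
            exact hgB n _ hciBase hcinotA
          · simp only [if_neg hji] at hu
            exact h6 j (by omega) u (Finset.mem_of_mem_erase hu) k hk
        · -- (7) within-R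
          intro j hj u hu u' hu' hne
          by_cases hji : j = i
          · simp only [if_pos hji] at hu hu'
            obtain ⟨n, hn, rfl⟩ := hRnewfact u hu
            obtain ⟨m, hm, rfl⟩ := hRnewfact u' hu'
            have hnm : n ≠ m := fun hh => hne (by rw [hh])
            rcases lt_or_gt_of_ne hnm with hh | hh
            · exact fun hE => (hgE m n hh) (hsymm _ _ hE)
            · exact hgE n m hh
          · simp only [if_neg hji] at hu hu'
            exact h7 j (by omega) u (Finset.mem_of_mem_erase hu) u' (Finset.mem_of_mem_erase hu') hne
        · -- (8) cross-R
          intro j j' hj hj' hne u hu u' hu'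
          by_cases hji : j = i <;> by_cases hji' : j' = i
          · omega
          · -- j = i (new), j' old
            simp only [if_pos hji] at hu
            simp only [if_neg hji'] at hu'
            obtain ⟨n, hn, rfl⟩ := hRnewfact u hu
            have hj'2 : j' < i := by omega
            exact hgB n u' (holdBase j' hj'2 u' hu') (holdnotA j' hj'2 u' hu')
          · -- j old, j' = i
            simp only [if_neg hji] at hu
            simp only [if_pos hji'] at hu'
            obtain ⟨n, hn, rfl⟩ := hRnewfact u' hu'
            have hj2 : j < i := by omega
            exact fun hE =>
              (hgB n u (holdBase j hj2 u hu) (holdnotA j hj2 u hu)) (hsymm _ _ hE)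
          · simp only [if_neg hji] at hu
            simp only [if_neg hji'] at hu'
            exact h8 j j' (by omega) (by omega) hne u (Finset.mem_of_mem_erase hu)
              u' (Finset.mem_of_mem_erase hu')
        · -- (9) not in Sfin
          intro j hj u hu
          by_cases hji : j = i
          · simp only [if_pos hji] at hu
            obtain ⟨n, hn, rfl⟩ := hRnewfact u hu
            intro hS
            exact hgnB n (Finset.mem_union_left _ hS)
          · simp only [if_neg hji] at hu
            exact h9 j (by omega) u (Finset.mem_of_mem_erase hu)
    -- endgame for ℓ ≥ 4
    obtain ⟨z, R, h1, h2, h3, -, -, -, -, -, -⟩ := main L le_rfl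
    have hznotC : ∀ j, j < L → ∀ k', z j ≠ c k' := by
      intro j hj k' heq
      exact hcd k' (heq ▸ h1 j hj)
    have hcert : ∀ j, j < L → ∀ k : Fin L, (k : ℕ) = j → ¬ E (z j) (c k) := by
      intro j hj k hk hE
      have hclq : ∀ k', E (z j) (c k') := by
        intro k'
        by_cases hkk : (k' : ℕ) = j
        · have : k' = k := Fin.ext (by omega)
          rwa [this]
        · exact h2 j hj k' hkk
      apply hKfree
      refine ⟨insert (z j) CS, ?_, ?_⟩
      · rw [Finset.card_insert_of_notMem, hCScard]
        · omega
        · intro hmem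
          obtain ⟨k', -, hk'⟩ := Finset.mem_image.mp hmem
          exact hznotC j hj k' hk'.symm
      · intro x hx x' hx' hne
        rcases Finset.mem_insert.mp hx with rfl | hx2 <;>
          rcases Finset.mem_insert.mp hx' with rfl | hx2'
        · exact absurd rfl hne
        · obtain ⟨k', -, rfl⟩ := Finset.mem_image.mp hx2'
          exact hclq k'
        · obtain ⟨k', -, rfl⟩ := Finset.mem_image.mp hx2
          exact hsymm _ _ (hclq k')
        · obtain ⟨k1, -, rfl⟩ := Finset.mem_image.mp hx2
          obtain ⟨k2, -, rfl⟩ := Finset.mem_image.mp hx2'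
          exact hcE k1 k2 (fun hh => hne (by rw [hh]))
    -- final clique
    have hzinj : ∀ j j', j < L → j' < L → z j = z j' → j = j' := by
      intro j j' hj hj' heq
      by_contra hne
      have hk : ((⟨j', hj'⟩ : Fin L) : ℕ) ≠ j := by simpa using fun hh => hne hh.symm
      have hEz := h2 j hj ⟨j', hj'⟩ hk
      rw [heq] at hEz
      exact hcert j' hj' ⟨j', hj'⟩ rfl hEz
    set ZS := (Finset.range L).image z with hZSdef
    have hdZ : d ∉ ZS := by
      intro hd2
      obtain ⟨j, hjm, heq⟩ := Finset.mem_image.mp hd2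
      have hj : j < L := Finset.mem_range.mp hjm
      -- pick k with val ≠ j
      have : ∃ k : Fin L, (k : ℕ) ≠ j := by
        by_cases hj0 : j = 0
        · exact ⟨⟨1, by omega⟩, by simp [hj0]⟩
        · exact ⟨⟨0, by omega⟩, by simpa using fun hh => hj0 hh.symm⟩
      obtain ⟨k, hk⟩ := this
      exact hdc k (heq ▸ h2 j hj k hk)
    apply hKfree
    refine ⟨insert d ZS, ?_, ?_⟩
    · rw [Finset.card_insert_of_notMem hdZ, hZSdef,
        Finset.card_image_of_injOn, Finset.card_range]
      · omega
      · intro a ha b hb hab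
        exact hzinj a b (Finset.mem_range.mp ha) (Finset.mem_range.mp hb) hab
    · intro x hx x' hx' hne
      rcases Finset.mem_insert.mp hx with rfl | hx2 <;>
        rcases Finset.mem_insert.mp hx' with rfl | hx2'
      · exact absurd rfl hne
      · obtain ⟨j, hjm, rfl⟩ := Finset.mem_image.mp hx2'
        exact hsymm _ _ (h1 j (Finset.mem_range.mp hjm))
      · obtain ⟨j, hjm, rfl⟩ := Finset.mem_image.mp hx2
        exact h1 j (Finset.mem_range.mp hjm)
      · obtain ⟨j, hjm, rfl⟩ := Finset.mem_image.mp hx2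
        obtain ⟨j', hjm', rfl⟩ := Finset.mem_image.mp hx2'
        have : j ≠ j' := fun hh => hne (by rw [hh])
        exact h3 j j' (Finset.mem_range.mp hjm) (Finset.mem_range.mp hjm') this

  · -- ℓ = 3
    have hl3 : ℓ = 3 := by omega
    have hl1 : ℓ - 1 = 2 := by omega
    set k0 : Fin L := ⟨0, by omega⟩ with hk0
    set k1 : Fin L := ⟨1, by omega⟩ with hk1
    have hk01 : k0 ≠ k1 := by
      intro h
      have := congrArg Fin.val h
      simp [hk0, hk1] at this
    have hc12 : E (c k0) (c k1) := hcE k0 k1 hk01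
    have hc12' : c k0 ≠ c k1 := fun h => hk01 (hcinj h)
    -- triangle contradiction helper
    have tri : ∀ x y' w', E x y' → E x w' → E y' w' →
        x ≠ y' → x ≠ w' → y' ≠ w' → False := by
      intro x y' w' e1 e2 e3 n1 n2 n3
      apply hKfree
      refine ⟨{x, y', w'}, ?_, ?_⟩
      · rw [hl3]
        rw [Finset.card_insert_of_notMem (by simp [n1, n2]),
          Finset.card_insert_of_notMem (by simp [n3]), Finset.card_singleton]
      · intro a ha b hb hne
        simp only [Finset.mem_insert, Finset.mem_singleton] at ha hb
        rcases ha with rfl | rfl | rfl <;> rcases hb with rfl | rfl | rfl <;>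
          first
            | exact absurd rfl hne
            | exact e1
            | exact e2
            | exact e3
            | exact hsymm _ _ e1
            | exact hsymm _ _ e2
            | exact hsymm _ _ e3
    -- independence helpers
    have indep3 : ∀ (a b c' : H), ¬ E a b → ¬ E a c' → ¬ E b c' →
        ∀ x ∈ ({a, b, c'} : Finset H), ∀ y ∈ ({a, b, c'} : Finset H), x ≠ y → ¬ E x y := by
      intro a b c' hab hac hbc x hx y hy hne
      simp only [Finset.mem_insert, Finset.mem_singleton] at hx hy
      rcases hx with rfl | rfl | rfl <;> rcases hy with rfl | rfl | rfl <;>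
        first
          | exact absurd rfl hne
          | exact hab
          | exact hac
          | exact hbc
          | exact fun h => hab (hsymm _ _ h)
          | exact fun h => hac (hsymm _ _ h)
          | exact fun h => hbc (hsymm _ _ h)
    have indep2 : ∀ (a b : H), ¬ E a b →
        ∀ x ∈ ({a, b} : Finset H), ∀ y ∈ ({a, b} : Finset H), x ≠ y → ¬ E x y := by
      intro a b hab x hx y hy hne
      simp only [Finset.mem_insert, Finset.mem_singleton] at hx hy
      rcases hx with rfl | rfl <;> rcases hy with rfl | rfl <;>
        first
          | exact absurd rfl hne
          | exact hab
          | exact fun h => hab (hsymm _ _ h)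
    -- stage 1 family with A1 = {c k1, d}
    set A1 : Finset H := {c k1, d} with hA1def
    have hA1free : KFreeOn E (ℓ - 1) A1 := by
      rw [hl1]
      exact kfreeOn_indep E A1 (indep2 (c k1) d (hcd k1))
    obtain ⟨g, hgA, hgB, hgE, hgNe, hgnA, hgnB⟩ := build_family ℓ E hHenson A1 Sfin hA1free
    have hgS : ∀ n, g n ∉ Sfin := hgnB
    -- pigeonhole: two with same image
    have hmaps : ∀ n ∈ Finset.range (Sfin.card + 1), r (g n) ∈ Sfin := fun n _ => hrange _
    have hcardlt : Sfin.card < (Finset.range (Sfin.card + 1)).card := by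
      rw [Finset.card_range]; omega
    obtain ⟨n₀, -, n₁, -, hne01, heq01⟩ :=
      Finset.exists_ne_map_eq_of_card_lt_of_maps_to hcardlt hmaps
    have hww' : g n₀ ≠ g n₁ := by
      rcases lt_or_gt_of_ne hne01 with hh | hh
      · exact fun h => (hgNe n₁ n₀ hh) h.symm
      · exact hgNe n₀ n₁ hh
    set z1 := r (g n₀) with hz1def
    have hz1w' : r (g n₁) = z1 := heq01.symm
    have hwc2 : E (g n₀) (c k1) := hgA n₀ _ (by simp [hA1def])
    have hwd : E (g n₀) d := hgA n₀ _ (by simp [hA1def])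
    have hwS : ∀ x ∈ Sfin, x ∉ A1 → ¬ E (g n₀) x := hgB n₀
    have hw'S : ∀ x ∈ Sfin, x ∉ A1 → ¬ E (g n₁) x := hgB n₁
    have hc1nA1 : c k0 ∉ A1 := by
      simp only [hA1def, Finset.mem_insert, Finset.mem_singleton]
      push_neg
      exact ⟨hc12', fun h => hdC k0 h.symm⟩
    have hfnA1 : f ∉ A1 := by
      simp only [hA1def, Finset.mem_insert, Finset.mem_singleton]
      push_neg
      exact ⟨hfC k1, hfD⟩
    have henA1 : e ∉ A1 := by
      simp only [hA1def, Finset.mem_insert, Finset.mem_singleton]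
      push_neg
      exact ⟨heC k1, heD⟩
    -- z1 facts
    have hz1c2 : E z1 (c k1) := by
      have := hhom _ _ hwc2
      rwa [hrc k1] at this
    have hz1d : E z1 d := by
      have := hhom _ _ hwd
      rwa [hrd] at this
    have hz1notc : ∀ k, z1 ≠ c k := fun k h => hcd k (h ▸ hz1d)
    have hz1c1 : ¬ E z1 (c k0) := by
      intro hE
      exact tri z1 (c k0) (c k1) hE hz1c2 hc12 (hz1notc k0) (hz1notc k1) hc12'
    -- v2
    set A2 : Finset H := {c k0, e, g n₀} with hA2def
    have hA2free : KFreeOn E (ℓ - 1) A2 := by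
      rw [hl1]
      refine kfreeOn_indep E A2 (indep3 (c k0) e (g n₀) ?_ ?_ ?_)
      · exact fun h => hec k0 (hsymm _ _ h)
      · exact fun h => hwS _ (hcS k0) hc1nA1 (hsymm _ _ h)
      · exact fun h => hwS e heS henA1 (hsymm _ _ h)
    obtain ⟨v2, hv2nA, hv2nB, hv2E, hv2B⟩ := hHenson A2 ((Sfin ∪ {g n₁}) \ A2)
      Finset.sdiff_disjoint.symm hA2free
    have hv2not : ∀ x, x ∈ Sfin ∪ {g n₁} → x ∉ A2 → ¬ E v2 x := fun x hx hnx =>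
      hv2B x (Finset.mem_sdiff.mpr ⟨hx, hnx⟩)
    have hv2c1 : E v2 (c k0) := hv2E _ (by simp [hA2def])
    have hv2e : E v2 e := hv2E _ (by simp [hA2def])
    have hv2w : E v2 (g n₀) := hv2E _ (by simp [hA2def])
    have hgnSne : ∀ n, ∀ x ∈ Sfin, g n ≠ x := fun n x hx h => hgS n (h ▸ hx)
    have hc2nA2 : c k1 ∉ A2 := by
      simp only [hA2def, Finset.mem_insert, Finset.mem_singleton]
      push_neg
      refine ⟨fun h => hc12' h.symm, fun h => heC k1 h.symm, fun h => hgnSne n₀ _ (hcS k1) h.symm⟩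
    have hfnA2 : f ∉ A2 := by
      simp only [hA2def, Finset.mem_insert, Finset.mem_singleton]
      push_neg
      exact ⟨hfC k0, hfE, fun h => hgnSne n₀ f hfS h.symm⟩
    have hw'nA2 : g n₁ ∉ A2 := by
      simp only [hA2def, Finset.mem_insert, Finset.mem_singleton]
      push_neg
      exact ⟨fun h => hgS n₁ (h ▸ hcS k0), fun h => hgS n₁ (h ▸ heS), fun h => hww' h.symm⟩
    have hv2c2 : ¬ E v2 (c k1) := hv2not _ (Finset.mem_union_left _ (hcS k1)) hc2nA2
    have hv2f : ¬ E v2 f := hv2not _ (Finset.mem_union_left _ hfS) hfnA2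
    have hv2w' : ¬ E v2 (g n₁) := hv2not _ (Finset.mem_union_right _ (by simp)) hw'nA2
    set z2 := r v2 with hz2def
    have hz2c1 : E z2 (c k0) := by
      have := hhom _ _ hv2c1
      rwa [hrc k0] at this
    have hz2e : E z2 e := by
      have := hhom _ _ hv2e
      rwa [hre] at this
    have hz2z1 : E z2 z1 := hhom _ _ hv2w
    have hz2notc : ∀ k, z2 ≠ c k := fun k h => hec k (hsymm _ _ (h ▸ hz2e))
    have hz2c2 : ¬ E z2 (c k1) := by
      intro hE
      exact tri z2 (c k0) (c k1) hz2c1 hE hc12 (hz2notc k0) (hz2notc k1) hc12'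
    have hz12 : z1 ≠ z2 := fun h => hz1c1 (h ▸ hz2c1)
    -- anchor lemma 1 : ¬ E z1 f
    have hAL1 : ¬ E z1 f := by
      intro hEf
      have hqfree : KFreeOn E (ℓ - 1) ({f, c k0, g n₀} : Finset H) := by
        rw [hl1]
        refine kfreeOn_indep E _ (indep3 f (c k0) (g n₀) (hfc k0) ?_ ?_)
        · exact fun h => hwS f hfS hfnA1 (hsymm _ _ h)
        · exact fun h => hwS _ (hcS k0) hc1nA1 (hsymm _ _ h)
      obtain ⟨vq, -, -, hvqE, -⟩ := hHenson {f, c k0, g n₀} ∅ (by simp) hqfree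
      have hyf : E (r vq) f := by
        have := hhom _ _ (hvqE f (by simp))
        rwa [hrf] at this
      have hyc1 : E (r vq) (c k0) := by
        have := hhom _ _ (hvqE (c k0) (by simp))
        rwa [hrc k0] at this
      have hyz1 : E (r vq) z1 := hhom _ _ (hvqE (g n₀) (by simp))
      refine tri (r vq) f z1 hyf hyz1 (hsymm _ _ hEf) ?_ ?_ ?_
      · exact fun h => hfc k0 (h ▸ hyc1)
      · exact fun h => hz1c1 (h ▸ hyc1)
      · exact fun h => hfc k1 (h ▸ hz1c2)
    -- anchor lemma 2 : ¬ E z2 f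
    have hAL2 : ¬ E z2 f := by
      intro hEf
      have hqfree : KFreeOn E (ℓ - 1) ({f, c k1, v2} : Finset H) := by
        rw [hl1]
        refine kfreeOn_indep E _ (indep3 f (c k1) v2 (hfc k1) ?_ ?_)
        · exact fun h => hv2f (hsymm _ _ h)
        · exact fun h => hv2c2 (hsymm _ _ h)
      obtain ⟨vq, -, -, hvqE, -⟩ := hHenson {f, c k1, v2} ∅ (by simp) hqfree
      have hyf : E (r vq) f := by
        have := hhom _ _ (hvqE f (by simp))
        rwa [hrf] at this
      have hyc2 : E (r vq) (c k1) := by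
        have := hhom _ _ (hvqE (c k1) (by simp))
        rwa [hrc k1] at this
      have hyz2 : E (r vq) z2 := hhom _ _ (hvqE v2 (by simp))
      refine tri (r vq) f z2 hyf hyz2 (hsymm _ _ hEf) ?_ ?_ ?_
      · exact fun h => hfc k1 (h ▸ hyc2)
      · exact fun h => hz2c2 (h ▸ hyc2)
      · exact fun h => hfc k0 (h ▸ hz2c1)
    -- final vertex
    have hq3free : KFreeOn E (ℓ - 1) ({f, g n₁, v2} : Finset H) := by
      rw [hl1]
      refine kfreeOn_indep E _ (indep3 f (g n₁) v2 ?_ ?_ ?_)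
      · exact fun h => hw'S f hfS hfnA1 (hsymm _ _ h)
      · exact fun h => hv2f (hsymm _ _ h)
      · exact fun h => hv2w' (hsymm _ _ h)
    obtain ⟨v3, -, -, hv3E, -⟩ := hHenson {f, g n₁, v2} ∅ (by simp) hq3free
    have hz3f : E (r v3) f := by
      have := hhom _ _ (hv3E f (by simp))
      rwa [hrf] at this
    have hz3z1 : E (r v3) z1 := by
      have := hhom _ _ (hv3E (g n₁) (by simp))
      rwa [hz1w'] at this
    have hz3z2 : E (r v3) z2 := hhom _ _ (hv3E v2 (by simp))
    have h31 : r v3 ≠ z1 := fun h => hAL1 (h ▸ hz3f)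
    have h32 : r v3 ≠ z2 := fun h => hAL2 (h ▸ hz3f)
    exact tri (r v3) z1 z2 hz3z1 hz3z2 (hsymm _ _ hz2z1) h31 h32 hz12
end
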